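/- arXiv:2110.09161 — 7 statements merged into one kernel-verified Lean document; each statement's English description precedes it below -/
import Mathlib

section
/- For every Machine Covering instance and every arrival order, every greedy schedule has minimum load at least P_m, the size of the m-th largest job. -/
open Finset

noncomputable section

/-- Load of machine `M` under schedule `f` (job `i` has size `p i`). -/
def mcLoad {n m : ℕ} (p : Fin n → ℝ) (f : Fin n → Fin m) (M : Fin m) : ℝ :=
  ∑ i ∈ Finset.univ.filter (fun i => f i = M), p i

/-- Minimum load of a schedule. -/
def minLoad {n m : ℕ} (p : Fin n → ℝ) (f : Fin n → Fin m) : ℝ :=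
  ⨅ M : Fin m, mcLoad p f M

/-- Load on machine `M` coming from arrival positions `< t`, where `σ` is the arrival
order (the job arriving at position `j` is `σ j`) and `g j` is the machine receiving the
job arriving at position `j`. -/
def prefLoad {n m : ℕ} (p : Fin n → ℝ) (σ : Equiv.Perm (Fin n))
    (g : Fin n → Fin m) (t : Fin n) (M : Fin m) : ℝ :=
  ∑ j ∈ Finset.univ.filter (fun j => j < t ∧ g j = M), p (σ j)

/-- `g` is a greedy schedule for the arrival order `σ`: every arriving job is placed on a
machine whose current load is minimal. -/
def IsGreedy {n m : ℕ} (p : Fin n → ℝ) (σ : Equiv.Perm (Fin n)) (g : Fin n → Fin m) : Prop :=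
  ∀ t : Fin n, ∀ M : Fin m, prefLoad p σ g t (g t) ≤ prefLoad p σ g t M

/-- The `i`-th largest job size (1-indexed), with `nthLargest p i = 0` for `i > n`. -/
def nthLargest {n : ℕ} (p : Fin n → ℝ) (i : ℕ) : ℝ :=
  ((List.ofFn p).mergeSort (fun a b => decide (b ≤ a))).getD (i - 1) 0

end

lemma myCountP {α : Type*} (q : α → Bool) (l : List α) :
    l.countP q = (l.map (fun a => if q a = true then 1 else 0)).sum := by
  induction l with
  | nil => simp
  | cons a l ih => by_cases h : q a <;> simp [List.countP_cons, ih, h, Nat.add_comm]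

lemma myCard {n : ℕ} (p : Fin n → ℝ) (c : ℝ) :
    (List.ofFn p).countP (fun x => decide (c ≤ x)) = (Finset.univ.filter (fun i => c ≤ p i)).card := by
  rw [List.ofFn_eq_map, List.countP_map, Finset.card_filter]
  rw [myCountP, Fin.univ_def, Finset.sum]
  simp [Function.comp]

lemma nth_card {n m : ℕ} (p : Fin n → ℝ) (hm : 1 ≤ m) (hmn : m ≤ n) :
    m ≤ (Finset.univ.filter (fun i => nthLargest p m ≤ p i)).card := by
  set l := (List.ofFn p).mergeSort (fun a b => decide (b ≤ a)) with hl
  have hlen : l.length = n := by simp [hl, List.length_mergeSort]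
  have hsort : l.Pairwise (fun a b => decide (b ≤ a) = true) :=
    List.pairwise_mergeSort
      (fun a b c hab hbc => by
        simp only [decide_eq_true_eq] at *; linarith)
      (fun a b => by simpa using le_total b a) _
  have hidx : m - 1 < l.length := by omega
  have hc : nthLargest p m = l[m-1] := by
    rw [nthLargest]; exact List.getD_eq_getElem l 0 hidx
  have hall : ∀ a ∈ l.take m, decide (nthLargest p m ≤ a) = true := by
    intro a ha
    rw [List.mem_iff_getElem] at ha
    obtain ⟨k, hk, hka⟩ := ha
    have hk' : k < m := by
      have := hk; rw [List.length_take] at this; omega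
    rw [List.getElem_take] at hka
    subst hka
    rw [hc]
    simp only [decide_eq_true_eq]
    rcases Nat.lt_or_ge k (m-1) with h | h
    · have := List.pairwise_iff_getElem.mp hsort k (m-1) (by omega) hidx h
      simpa using this
    · have : k = m - 1 := by omega
      subst this; exact le_refl _
  have htake : (l.take m).countP (fun x => decide (nthLargest p m ≤ x)) = m := by
    rw [List.countP_eq_length.mpr hall, List.length_take]
    omega
  have hsplit : l.countP (fun x => decide (nthLargest p m ≤ x))
      = (l.take m).countP (fun x => decide (nthLargest p m ≤ x))
        + (l.drop m).countP (fun x => decide (nthLargest p m ≤ x)) := by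
    conv_lhs => rw [← List.take_append_drop m l]
    rw [List.countP_append]
  have hperm : l.countP (fun x => decide (nthLargest p m ≤ x))
      = (List.ofFn p).countP (fun x => decide (nthLargest p m ≤ x)) :=
    (List.mergeSort_perm (List.ofFn p) _).countP_eq _
  rw [← myCard p (nthLargest p m), ← hperm, hsplit, htake]
  omega

/-- For every Machine Covering instance and every arrival order, every greedy
schedule has minimum load at least `P_m`, the size of the `m`-th largest job. -/
theorem stmt0 {n m : ℕ} (hm : 1 ≤ m) (p : Fin n → ℝ) (hp : ∀ i, 0 ≤ p i)
    (σ : Equiv.Perm (Fin n)) (g : Fin n → Fin m) (hg : IsGreedy p σ g) :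
    nthLargest p m ≤ minLoad p (fun i => g (σ.symm i)) := by
  haveI : Nonempty (Fin m) := Fin.pos_iff_nonempty.mp hm
  set f : Fin n → Fin m := fun i => g (σ.symm i) with hf
  set c := nthLargest p m with hc
  have hload_nonneg : ∀ M, (0:ℝ) ≤ mcLoad p f M := fun M =>
    Finset.sum_nonneg (fun i _ => hp i)
  have key : ∀ M, c ≤ mcLoad p f M := by
    by_contra hcon
    push_neg at hcon
    obtain ⟨M0, hM0⟩ := hcon
    have hmn : m ≤ n := by
      by_contra h
      push_neg at h
      have hc0 : c = 0 := by
        rw [hc, nthLargest]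
        apply List.getD_eq_default
        rw [List.length_mergeSort, List.length_ofFn]
        omega
      rw [hc0] at hM0
      exact absurd hM0 (not_lt.mpr (hload_nonneg M0))
    have hmc : ∀ M, mcLoad p f M
        = ∑ j ∈ Finset.univ.filter (fun j => g j = M), p (σ j) := by
      intro M
      rw [mcLoad]
      refine Finset.sum_nbij (fun i => σ.symm i) ?_ ?_ ?_ ?_
      · intro a ha
        simp only [Finset.mem_filter, Finset.mem_univ, true_and] at ha ⊢
        exact ha
      · exact fun a _ b _ h => σ.symm.injective h
      · intro b hb
        simp only [Finset.coe_filter, Finset.mem_univ, true_and, Set.mem_setOf_eq] at hb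
        refine ⟨σ b, ?_, by simp⟩
        simp only [Finset.coe_filter, Finset.mem_univ, true_and, Set.mem_setOf_eq, hf]
        simpa using hb
      · intro a _; simp
    have hpref_le : ∀ t, prefLoad p σ g t M0 ≤ mcLoad p f M0 := by
      intro t
      rw [hmc M0, prefLoad]
      apply Finset.sum_le_sum_of_subset_of_nonneg
      · intro j hj
        simp only [Finset.mem_filter, Finset.mem_univ, true_and] at hj ⊢
        exact hj.2
      · intro i _ _; exact hp _
    have hbig : ∀ t' t : Fin n, t' < t → p (σ t') ≤ prefLoad p σ g t (g t') := by
      intro t' t h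
      apply Finset.single_le_sum (f := fun j => p (σ j)) (fun i _ => hp _)
      simp [h]
    set S := Finset.univ.filter (fun i => c ≤ p i) with hS
    have hcard : m ≤ S.card := nth_card p hm hmn
    have haux : ∀ i ∈ S, ∀ j ∈ S, σ.symm i < σ.symm j → f i = f j → False := by
      intro i hi j hj hlt hfij
      have hci : c ≤ p i := (Finset.mem_filter.mp hi).2
      have h1 : p i ≤ prefLoad p σ g (σ.symm j) (g (σ.symm i)) := by
        have := hbig (σ.symm i) (σ.symm j) hlt
        simpa using this
      have h2 : g (σ.symm i) = g (σ.symm j) := hfij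
      have h3 : prefLoad p σ g (σ.symm j) (g (σ.symm j)) ≤ prefLoad p σ g (σ.symm j) M0 :=
        hg (σ.symm j) M0
      have h4 := hpref_le (σ.symm j)
      rw [h2] at h1
      linarith
    have hinj : Set.InjOn f ↑S := by
      intro i hi j hj hij
      by_contra hne
      have hne' : σ.symm i ≠ σ.symm j := fun h => hne (σ.symm.injective h)
      rcases lt_or_gt_of_ne hne' with h | h
      · exact haux i (by simpa using hi) j (by simpa using hj) h hij
      · exact haux j (by simpa using hj) i (by simpa using hi) h hij.symm
    have himage : Finset.image f S = Finset.univ := by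
      apply Finset.eq_of_subset_of_card_le (Finset.subset_univ _)
      rw [Finset.card_image_of_injOn hinj, Finset.card_univ, Fintype.card_fin]
      exact hcard
    have hmem : M0 ∈ Finset.image f S := himage ▸ Finset.mem_univ M0
    obtain ⟨i, hiS, hif⟩ := Finset.mem_image.mp hmem
    have h1 : c ≤ p i := (Finset.mem_filter.mp hiS).2
    have h2 : p i ≤ mcLoad p f M0 := by
      rw [mcLoad]
      apply Finset.single_le_sum (f := fun k => p k) (fun k _ => hp k)
      simp [hif]
    linarith
  rw [minLoad]
  exact le_ciInf key
end

section
/- For every Machine Covering instance, every arrival order, every greedy schedule, and every i ∈ {1,…,m}, the minimum load of the greedy schedule is at least L_i/m − P_i. -/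
open Finset

/-!
Greedy puts each job on a least-loaded machine, and loads only grow, so the load a machine
carries just before its last job arrives is at most the final minimum load `ℓ`. Summing over
machines, the total size is at most `m ℓ` plus the sizes of the (at most `m`) last jobs. With
`c = P_i`, any `k ≤ m` jobs have total size at most `m c + ∑ₓ (pₓ - min pₓ c)`, while
`∑ₓ min pₓ c ≥ L_i` because every job beyond the `i - 1` largest has size at most `c`.
Together, `L_i ≤ m (ℓ + c)`.
-/

section LastJobs

variable {ι κ : Type*} [Fintype ι] [LinearOrder ι] [DecidableEq κ]

def lastJobs (g : ι → κ) : Finset ι :=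
  univ.filter fun t => ∀ j, g j = g t → j ≤ t

theorem exists_mem_lastJobs (g : ι → κ) (j : ι) : ∃ t ∈ lastJobs g, g t = g j := by
  have hne : (univ.filter fun i => g i = g j).Nonempty := ⟨j, by simp⟩
  have hmem := (univ.filter fun i => g i = g j).max'_mem hne
  simp only [mem_filter, mem_univ, true_and] at hmem
  refine ⟨_, ?_, hmem⟩
  simp only [lastJobs, mem_filter, mem_univ, true_and]
  exact fun i hi => le_max' _ i (by simpa [hmem] using hi)

theorem card_lastJobs_le [Fintype κ] (g : ι → κ) : #(lastJobs g) ≤ Fintype.card κ := by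
  refine card_le_card_of_injOn g (fun _ _ => mem_coe.2 (mem_univ _)) fun s hs t ht hst => ?_
  simp only [lastJobs, mem_coe, mem_filter, mem_univ, true_and] at hs ht
  exact le_antisymm (ht s hst) (hs t hst.symm)

end LastJobs

section Greedy

variable {n m : ℕ} {p : Fin n → ℝ} {σ : Equiv.Perm (Fin n)} {g : Fin n → Fin m}

theorem minLoad_comp_symm (p : Fin n → ℝ) (σ : Equiv.Perm (Fin n)) (g : Fin n → Fin m) :
    minLoad p (fun i => g (σ.symm i)) = minLoad (fun j => p (σ j)) g := by
  unfold minLoad mcLoad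
  congr! 2 with M
  rw [sum_filter, sum_filter, ← Equiv.sum_comp σ]
  simp

theorem minLoad_nonneg {q : Fin n → ℝ} (hq : ∀ j, 0 ≤ q j) (g : Fin n → Fin m) :
    0 ≤ minLoad q g :=
  Real.iInf_nonneg fun _ => sum_nonneg fun j _ => hq j

theorem prefLoad_le_mcLoad (hp : ∀ i, 0 ≤ p i) (t : Fin n) (M : Fin m) :
    prefLoad p σ g t M ≤ mcLoad (fun j => p (σ j)) g M :=
  sum_le_sum_of_subset_of_nonneg (fun _ hj => by simp_all) fun _ _ _ => hp _

theorem IsGreedy.prefLoad_le_minLoad (hp : ∀ i, 0 ≤ p i) (hg : IsGreedy p σ g) (t : Fin n) :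
    prefLoad p σ g t (g t) ≤ minLoad (fun j => p (σ j)) g :=
  have : Nonempty (Fin m) := ⟨g t⟩
  le_ciInf fun M => (hg t M).trans (prefLoad_le_mcLoad hp t M)

theorem mcLoad_eq_prefLoad_add {t : Fin n} (ht : t ∈ lastJobs g) :
    mcLoad (fun j => p (σ j)) g (g t) = prefLoad p σ g t (g t) + p (σ t) := by
  simp only [lastJobs, mem_filter, mem_univ, true_and] at ht
  have hfiber : univ.filter (fun j => g j = g t) =
      insert t (univ.filter fun j => j < t ∧ g j = g t) := by
    ext j
    simp only [mem_filter, mem_univ, true_and, mem_insert]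
    constructor
    · intro hj
      rcases (ht j hj).lt_or_eq with hlt | rfl
      exacts [Or.inr ⟨hlt, hj⟩, Or.inl rfl]
    · rintro (rfl | ⟨-, hj⟩) <;> trivial
  rw [mcLoad, hfiber, sum_insert (by simp), add_comm]
  rfl

theorem IsGreedy.mcLoad_le_minLoad_add (hp : ∀ i, 0 ≤ p i) (hg : IsGreedy p σ g) (M : Fin m) :
    mcLoad (fun j => p (σ j)) g M ≤
      minLoad (fun j => p (σ j)) g + ∑ t ∈ lastJobs g with g t = M, p (σ t) := by
  by_cases hM : ∃ j, g j = M
  · obtain ⟨j, rfl⟩ := hM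
    obtain ⟨t, ht, htj⟩ := exists_mem_lastJobs g j
    rw [← htj, mcLoad_eq_prefLoad_add ht]
    gcongr
    · exact hg.prefLoad_le_minLoad hp t
    · exact single_le_sum (fun _ _ => hp _) (mem_filter.2 ⟨ht, rfl⟩)
  · simp only [not_exists] at hM
    have hempty : mcLoad (fun j => p (σ j)) g M = 0 := by
      simp [mcLoad, filter_false_of_mem fun j _ => hM j]
    rw [hempty]
    exact add_nonneg (minLoad_nonneg (fun _ => hp _) g) (sum_nonneg fun _ _ => hp _)

theorem IsGreedy.sum_le_mul_minLoad_add (hp : ∀ i, 0 ≤ p i) (hg : IsGreedy p σ g) :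
    ∑ j, p (σ j) ≤ m * minLoad (fun j => p (σ j)) g + ∑ t ∈ lastJobs g, p (σ t) := calc
  ∑ j, p (σ j) = ∑ M, mcLoad (fun j => p (σ j)) g M := (sum_fiberwise _ g _).symm
  _ ≤ ∑ M, (minLoad (fun j => p (σ j)) g + ∑ t ∈ lastJobs g with g t = M, p (σ t)) :=
    sum_le_sum fun M _ => hg.mcLoad_le_minLoad_add hp M
  _ = m * minLoad (fun j => p (σ j)) g + ∑ t ∈ lastJobs g, p (σ t) := by
    rw [sum_add_distrib, sum_fiberwise, sum_const, card_univ, Fintype.card_fin, nsmul_eq_mul]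

end Greedy

theorem sum_le_mul_add_sum_sub_min {ι : Type*} [Fintype ι] (f : ι → ℝ) {s : Finset ι} {k : ℕ}
    (hs : #s ≤ k) {c : ℝ} (hc : 0 ≤ c) :
    ∑ x ∈ s, f x ≤ k * c + (∑ x, f x - ∑ x, min (f x) c) := calc
  ∑ x ∈ s, f x = ∑ x ∈ s, min (f x) c + ∑ x ∈ s, (f x - min (f x) c) := by
    rw [← sum_add_distrib]; simp
  _ ≤ ∑ _x ∈ s, c + ∑ x, (f x - min (f x) c) :=
    add_le_add (sum_le_sum fun _ _ => min_le_right _ _)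
      (sum_le_sum_of_subset_of_nonneg (subset_univ s) fun _ _ _ => sub_nonneg.2 (min_le_left _ _))
  _ ≤ k * c + (∑ x, f x - ∑ x, min (f x) c) := by
    rw [sum_const, nsmul_eq_mul, sum_sub_distrib]
    gcongr

section Sorted

variable {n : ℕ} (p : Fin n → ℝ)

theorem List.sum_map_eq_sum_range_getD {α β : Type*} [AddCommMonoid β] (l : List α) (d : α)
    (F : α → β) : (l.map F).sum = ∑ k ∈ Finset.range l.length, F (l.getD k d) := by
  induction l with
  | nil => simp
  | cons a l ih => simp [Finset.sum_range_succ', ih, add_comm]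

theorem sum_Icc_nthLargest (F : ℝ → ℝ) :
    ∑ j ∈ Icc 1 n, F (nthLargest p j) = ∑ x, F (p x) := by
  set l := (List.ofFn p).mergeSort (fun a b => decide (b ≤ a))
  have hperm : l.Perm (List.ofFn p) := List.mergeSort_perm _ _
  have hsum : ∑ x, F (p x) = ((List.ofFn p).map F).sum := by
    rw [List.map_ofFn, List.sum_ofFn]; rfl
  rw [hsum, ← Ico_add_one_right_eq_Icc, sum_Ico_eq_sum_range, Nat.add_sub_cancel,
    ← (hperm.map F).sum_eq, List.sum_map_eq_sum_range_getD l 0, hperm.length_eq,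
    List.length_ofFn]
  simp [nthLargest, l, add_comm 1]

variable {p}

theorem nthLargest_nonneg (hp : ∀ i, 0 ≤ p i) (j : ℕ) : 0 ≤ nthLargest p j := by
  unfold nthLargest
  set l := (List.ofFn p).mergeSort (fun a b => decide (b ≤ a))
  by_cases hj : j - 1 < l.length
  · obtain ⟨x, hx⟩ := List.mem_ofFn.1 ((List.mergeSort_perm _ _).subset (l.getElem_mem hj))
    rw [List.getD_eq_getElem _ _ hj, ← hx]
    exact hp x
  · rw [List.getD_eq_default _ _ (not_lt.1 hj)]

theorem nthLargest_antitone (hp : ∀ i, 0 ≤ p i) : Antitone (nthLargest p) := by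
  intro j k hjk
  unfold nthLargest
  set l := (List.ofFn p).mergeSort (fun a b => decide (b ≤ a))
  by_cases hk : k - 1 < l.length
  · have hsorted : l.Pairwise fun a b => decide (b ≤ a) = true :=
      List.pairwise_mergeSort
        (fun _ _ _ h₁ h₂ => by simp only [decide_eq_true_eq] at *; exact le_trans h₂ h₁)
        (fun a b => by simpa using le_total b a) _
    rcases (Nat.sub_le_sub_right hjk 1).lt_or_eq with hlt | heq
    · rw [List.getD_eq_getElem _ _ hk, List.getD_eq_getElem _ _ (by omega)]
      simpa using List.pairwise_iff_getElem.1 hsorted _ _ (by omega) hk hlt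
    · rw [heq]
  · rw [List.getD_eq_default _ _ (not_lt.1 hk)]
    exact nthLargest_nonneg hp j

theorem sum_Icc_nthLargest_le_sum_min (hp : ∀ i, 0 ≤ p i) {i : ℕ} (hi : 1 ≤ i) :
    ∑ j ∈ Icc i n, nthLargest p j ≤ ∑ x, min (p x) (nthLargest p i) := calc
  ∑ j ∈ Icc i n, nthLargest p j = ∑ j ∈ Icc i n, min (nthLargest p j) (nthLargest p i) :=
    sum_congr rfl fun _ hj => (min_eq_left (nthLargest_antitone hp (mem_Icc.1 hj).1)).symm
  _ ≤ ∑ j ∈ Icc 1 n, min (nthLargest p j) (nthLargest p i) :=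
    sum_le_sum_of_subset_of_nonneg (Icc_subset_Icc_left hi) fun _ _ _ =>
      le_min (nthLargest_nonneg hp _) (nthLargest_nonneg hp _)
  _ = ∑ x, min (p x) (nthLargest p i) := sum_Icc_nthLargest p fun a => min a _

end Sorted

theorem stmt1_general {n m : ℕ} (hm : 1 ≤ m) (p : Fin n → ℝ) (hp : ∀ i, 0 ≤ p i)
    (σ : Equiv.Perm (Fin n)) (g : Fin n → Fin m) (hg : IsGreedy p σ g)
    (i : ℕ) (hi1 : 1 ≤ i) :
    (∑ j ∈ Finset.Icc i n, nthLargest p j) / m - nthLargest p i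
      ≤ minLoad p (fun i => g (σ.symm i)) := by
  rw [minLoad_comp_symm]
  set ℓ := minLoad (fun j => p (σ j)) g
  set c := nthLargest p i
  have htotal : ∑ j, p (σ j) ≤ m * ℓ + ∑ t ∈ lastJobs g, p (σ t) :=
    hg.sum_le_mul_minLoad_add hp
  have hlast : ∑ t ∈ lastJobs g, p (σ t) ≤ m * c + (∑ j, p (σ j) - ∑ j, min (p (σ j)) c) :=
    sum_le_mul_add_sum_sub_min _ ((card_lastJobs_le g).trans_eq (Fintype.card_fin m))
      (nthLargest_nonneg hp i)
  have hsmall : ∑ j ∈ Icc i n, nthLargest p j ≤ ∑ x, min (p x) c :=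
    sum_Icc_nthLargest_le_sum_min hp hi1
  rw [Equiv.sum_comp σ p] at htotal hlast
  rw [Equiv.sum_comp σ fun x => min (p x) c] at hlast
  rw [sub_le_iff_le_add, div_le_iff₀ (by exact_mod_cast hm)]
  linarith

/-- For every Machine Covering instance, every arrival order, every greedy
schedule, and every `i ∈ {1,…,m}`, the minimum load of the greedy schedule is at least
`L_i/m − P_i`, where `L_i = Σ_{j ≥ i} P_j`. -/
theorem stmt1 {n m : ℕ} (hm : 1 ≤ m) (p : Fin n → ℝ) (hp : ∀ i, 0 ≤ p i)
    (σ : Equiv.Perm (Fin n)) (g : Fin n → Fin m) (hg : IsGreedy p σ g)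
    (i : ℕ) (hi1 : 1 ≤ i) (him : i ≤ m) :
    (∑ j ∈ Finset.Icc i n, nthLargest p j) / m - nthLargest p i
      ≤ minLoad p (fun i => g (σ.symm i)) :=
  stmt1_general hm p hp σ g hg i hi1
end

section
/- Fix β ≥ 0 and call a job large if its size exceeds β and small otherwise. Suppose the number k̃ of large jobs satisfies k̃ < m. For a fixed arrival order and each 0 ≤ i ≤ k̃, let S_i be the total size of the small jobs that are preceded in the order by exactly i large jobs. Then every greedy schedule for this order has minimum load at least min{ Σ_{i=0}^{k̃} S_i/(m−i) − β , β }. -/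
open Finset

/-! Fix a machine `M₀` whose final load `L` is below `β` (otherwise there is nothing to prove).
Every greedy choice then sees a load at most `L < β`, so a large job never joins a machine that
already holds one, and after `i` large jobs exactly `m - i` machines are still free of large jobs.
The average load of these free machines never decreases: a small job of size `s` arriving after
`i` large jobs raises it by exactly `s / (m - i)`, and a large job removes a free machine of
minimum load. Hence `∑ S_i / (m - i)` is at most the final average free load, which is at most
`L + β`: the last job of a free machine is small and arrived when the machine's load was at
most `L`. -/

def arrivedBefore (n t : ℕ) : Finset (Fin n) :=
  univ.filter fun j => (j : ℕ) < t

section Arrival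

variable {n t : ℕ}

@[simp]
lemma mem_arrivedBefore {j : Fin n} : j ∈ arrivedBefore n t ↔ (j : ℕ) < t := by
  simp [arrivedBefore]

lemma arrivedBefore_succ (ht : t < n) :
    arrivedBefore n (t + 1) = insert ⟨t, ht⟩ (arrivedBefore n t) := by
  ext j
  simp only [mem_insert, mem_arrivedBefore, Fin.ext_iff]
  omega

lemma arrivedBefore_mono : Monotone (arrivedBefore n) :=
  fun _ _ h _ hj => mem_arrivedBefore.2 ((mem_arrivedBefore.1 hj).trans_le h)

lemma arrivedBefore_self : arrivedBefore n n = univ := by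
  ext j
  simp

end Arrival

lemma sum_div_card_le_sum_erase_div_card {ι 𝕜 : Type*} [DecidableEq ι] [Field 𝕜]
    [LinearOrder 𝕜] [IsStrictOrderedRing 𝕜] {s : Finset ι} {f : ι → 𝕜} {a : ι} (ha : a ∈ s)
    (hmin : ∀ i ∈ s, f a ≤ f i) (hne : (s.erase a).Nonempty) :
    (∑ i ∈ s, f i) / #s ≤ (∑ i ∈ s.erase a, f i) / #(s.erase a) := by
  have hk : (0 : 𝕜) < #(s.erase a) := by exact_mod_cast hne.card_pos
  have hrest : #(s.erase a) • f a ≤ ∑ i ∈ s.erase a, f i :=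
    card_nsmul_le_sum _ _ _ fun i hi => hmin i (mem_of_mem_erase hi)
  rw [nsmul_eq_mul] at hrest
  rw [← add_sum_erase s f ha, ← card_erase_add_one ha, Nat.cast_add_one,
    div_le_div_iff₀ (by positivity) hk]
  nlinarith

noncomputable section

variable {n m : ℕ} (p : Fin n → ℝ) (σ : Equiv.Perm (Fin n)) (g : Fin n → Fin m) (β : ℝ)

def loadBefore (t : ℕ) (M : Fin m) : ℝ :=
  ∑ j ∈ (arrivedBefore n t).filter (fun j => g j = M), p (σ j)

def largeBefore (t : ℕ) : Finset (Fin n) :=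
  (arrivedBefore n t).filter fun j => β < p (σ j)

def largeMachines (t : ℕ) : Finset (Fin m) :=
  (largeBefore p σ β t).image g

-- The contribution of the first `t` arrivals to `∑ i, S i / (m - i)`.
variable (m) in
def weightedSmallLoad (t : ℕ) : ℝ :=
  ∑ j ∈ (arrivedBefore n t).filter (fun j => p (σ j) ≤ β),
    p (σ j) / ((m : ℝ) - #(largeBefore p σ β j))

end

section Greedy

variable {n m t : ℕ} {p : Fin n → ℝ} {σ : Equiv.Perm (Fin n)} {g : Fin n → Fin m} {β : ℝ}

lemma prefLoad_eq_loadBefore (j : Fin n) (M : Fin m) :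
    prefLoad p σ g j M = loadBefore p σ g j M := by
  rw [prefLoad, loadBefore, arrivedBefore, filter_filter]
  rfl

lemma mcLoad_eq_loadBefore (M : Fin m) :
    mcLoad p (fun i => g (σ.symm i)) M = loadBefore p σ g n M := by
  rw [mcLoad, loadBefore, arrivedBefore_self]
  exact sum_equiv σ.symm (by simp) (by simp)

lemma loadBefore_succ (ht : t < n) (M : Fin m) :
    loadBefore p σ g (t + 1) M
      = loadBefore p σ g t M + if g ⟨t, ht⟩ = M then p (σ ⟨t, ht⟩) else 0 := by
  simp only [loadBefore, arrivedBefore_succ ht, filter_insert]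
  split_ifs
  · rw [sum_insert (by simp), add_comm]
  · rw [add_zero]

lemma loadBefore_mono (hp : ∀ i, 0 ≤ p i) {t t' : ℕ} (h : t ≤ t') (M : Fin m) :
    loadBefore p σ g t M ≤ loadBefore p σ g t' M :=
  sum_le_sum_of_subset_of_nonneg (filter_subset_filter _ (arrivedBefore_mono h))
    fun j _ _ => hp (σ j)

@[simp]
lemma mem_largeBefore {j : Fin n} : j ∈ largeBefore p σ β t ↔ (j : ℕ) < t ∧ β < p (σ j) := by
  simp [largeBefore]

lemma largeBefore_succ (ht : t < n) :
    largeBefore p σ β (t + 1) = if β < p (σ ⟨t, ht⟩) then insert ⟨t, ht⟩ (largeBefore p σ β t)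
      else largeBefore p σ β t := by
  rw [largeBefore, arrivedBefore_succ ht, filter_insert]
  rfl

lemma largeBefore_mono : Monotone (largeBefore p σ β) :=
  fun _ _ h => filter_subset_filter _ (arrivedBefore_mono h)

lemma card_largeBefore_self : #(largeBefore p σ β n) = #(univ.filter fun i => β < p i) := by
  rw [largeBefore, arrivedBefore_self]
  exact card_equiv σ (by simp)

lemma weightedSmallLoad_succ (ht : t < n) :
    weightedSmallLoad m p σ β (t + 1) = weightedSmallLoad m p σ β t +
      if p (σ ⟨t, ht⟩) ≤ β then p (σ ⟨t, ht⟩) / ((m : ℝ) - #(largeBefore p σ β t)) else 0 := by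
  simp only [weightedSmallLoad, arrivedBefore_succ ht, filter_insert]
  split_ifs
  · rw [sum_insert (by simp), add_comm]
  · rw [add_zero]

lemma lt_loadBefore_of_mem_largeMachines (hp : ∀ i, 0 ≤ p i) {M : Fin m}
    (hM : M ∈ largeMachines p σ g β t) : β < loadBefore p σ g t M := by
  obtain ⟨j, hj, rfl⟩ := mem_image.1 hM
  rw [mem_largeBefore] at hj
  exact hj.2.trans_le <| single_le_sum (f := fun j => p (σ j)) (fun i _ => hp (σ i))
    (by simpa using hj.1)

lemma card_compl_largeMachines (h : #(largeMachines p σ g β t) = #(largeBefore p σ β t)) :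
    (#(largeMachines p σ g β t)ᶜ : ℝ) = m - #(largeBefore p σ β t) := by
  rw [card_compl, Fintype.card_fin,
    Nat.cast_sub ((card_le_univ _).trans_eq (Fintype.card_fin m)), h]

lemma IsGreedy.loadBefore_choice_le (hg : IsGreedy p σ g) (j : Fin n) (M : Fin m) :
    loadBefore p σ g j (g j) ≤ loadBefore p σ g j M := by
  simpa only [prefLoad_eq_loadBefore] using hg j M

lemma IsGreedy.loadBefore_le (hg : IsGreedy p σ g) (hp : ∀ i, 0 ≤ p i) (j : Fin n)
    (M : Fin m) : loadBefore p σ g j (g j) ≤ loadBefore p σ g n M :=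
  (hg.loadBefore_choice_le j M).trans (loadBefore_mono hp j.isLt.le M)

variable {M₀ : Fin m}

lemma notMem_largeMachines_of_loadBefore_lt (hp : ∀ i, 0 ≤ p i)
    (hM₀ : loadBefore p σ g n M₀ < β) (ht : t ≤ n) : M₀ ∉ largeMachines p σ g β t :=
  fun h => (lt_loadBefore_of_mem_largeMachines hp h).not_ge
    ((loadBefore_mono hp ht M₀).trans hM₀.le)

lemma IsGreedy.choice_notMem_largeMachines (hg : IsGreedy p σ g) (hp : ∀ i, 0 ≤ p i)
    (hM₀ : loadBefore p σ g n M₀ < β) (j : Fin n) : g j ∉ largeMachines p σ g β j :=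
  fun h => (lt_loadBefore_of_mem_largeMachines hp h).not_ge
    ((hg.loadBefore_le hp j M₀).trans hM₀.le)

lemma IsGreedy.injOn_large (hg : IsGreedy p σ g) (hp : ∀ i, 0 ≤ p i)
    (hM₀ : loadBefore p σ g n M₀ < β) : Set.InjOn g {j | β < p (σ j)} := by
  have hne : ∀ i j : Fin n, i < j → β < p (σ i) → g i ≠ g j := fun i j hij hi hgij =>
    hg.choice_notMem_largeMachines hp hM₀ j (mem_image.2 ⟨i, mem_largeBefore.2 ⟨hij, hi⟩, hgij⟩)
  intro i hi j hj hgij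
  rcases lt_trichotomy i j with h | h | h
  · exact absurd hgij (hne i j h hi)
  · exact h
  · exact absurd hgij.symm (hne j i h hj)

lemma IsGreedy.card_largeMachines (hg : IsGreedy p σ g) (hp : ∀ i, 0 ≤ p i)
    (hM₀ : loadBefore p σ g n M₀ < β) (t : ℕ) :
    #(largeMachines p σ g β t) = #(largeBefore p σ β t) :=
  card_image_of_injOn ((hg.injOn_large hp hM₀).mono fun _ hj => (mem_largeBefore.1 hj).2)

lemma IsGreedy.weightedSmallLoad_le_average (hg : IsGreedy p σ g) (hp : ∀ i, 0 ≤ p i)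
    (hM₀ : loadBefore p σ g n M₀ < β) (t : ℕ) (ht : t ≤ n) :
    weightedSmallLoad m p σ β t ≤ (∑ M ∈ (largeMachines p σ g β t)ᶜ, loadBefore p σ g t M) /
      #(largeMachines p σ g β t)ᶜ := by
  induction t with
  | zero => simp [weightedSmallLoad, loadBefore, arrivedBefore]
  | succ t ih =>
    have ht' : t < n := ht
    set j : Fin n := ⟨t, ht'⟩
    have hfree : g j ∈ (largeMachines p σ g β t)ᶜ :=
      mem_compl.2 (hg.choice_notMem_largeMachines hp hM₀ j)
    by_cases hj : β < p (σ j)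
    · have hmachines : largeMachines p σ g β (t + 1) = insert (g j) (largeMachines p σ g β t) := by
        rw [largeMachines, largeBefore_succ ht', if_pos hj, image_insert]
        rfl
      have hloads : ∑ M ∈ (largeMachines p σ g β t)ᶜ.erase (g j), loadBefore p σ g (t + 1) M
          = ∑ M ∈ (largeMachines p σ g β t)ᶜ.erase (g j), loadBefore p σ g t M :=
        sum_congr rfl fun M hM => by
          rw [loadBefore_succ ht', if_neg (ne_of_mem_erase hM).symm, add_zero]
      have hM₀free : M₀ ∈ (largeMachines p σ g β t)ᶜ.erase (g j) := by
        rw [← compl_insert, ← hmachines]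
        exact mem_compl.2 (notMem_largeMachines_of_loadBefore_lt hp hM₀ ht)
      rw [weightedSmallLoad_succ ht', if_neg (not_le.2 hj), add_zero, hmachines, compl_insert,
        hloads]
      exact (ih ht'.le).trans (sum_div_card_le_sum_erase_div_card hfree
        (fun M _ => hg.loadBefore_choice_le j M) ⟨M₀, hM₀free⟩)
    · have hmachines : largeMachines p σ g β (t + 1) = largeMachines p σ g β t := by
        rw [largeMachines, largeBefore_succ ht', if_neg hj]
        rfl
      have hloads : ∑ M ∈ (largeMachines p σ g β t)ᶜ, loadBefore p σ g (t + 1) M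
          = ∑ M ∈ (largeMachines p σ g β t)ᶜ, loadBefore p σ g t M + p (σ j) := by
        simp only [loadBefore_succ ht', sum_add_distrib, sum_ite_eq]
        rw [if_pos hfree]
      rw [weightedSmallLoad_succ ht', if_pos (not_lt.1 hj), hmachines, hloads, add_div,
        ← card_compl_largeMachines (hg.card_largeMachines hp hM₀ t)]
      exact add_le_add_left (ih ht'.le) _

lemma IsGreedy.loadBefore_le_add_of_notMem_largeMachines (hg : IsGreedy p σ g)
    (hp : ∀ i, 0 ≤ p i) (hM₀ : loadBefore p σ g n M₀ < β) {M : Fin m}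
    (hM : M ∉ largeMachines p σ g β n) (t : ℕ) (ht : t ≤ n) : loadBefore p σ g t M ≤ loadBefore p σ g n M₀ + β := by
  induction t with
  | zero =>
    have hL : 0 ≤ loadBefore p σ g n M₀ := sum_nonneg fun j _ => hp (σ j)
    have hzero : loadBefore p σ g 0 M = 0 := by simp [loadBefore, arrivedBefore]
    linarith
  | succ t ih =>
    have ht' : t < n := ht
    set j : Fin n := ⟨t, ht'⟩
    rw [loadBefore_succ ht']
    split_ifs with hjM
    · have hsmall : p (σ j) ≤ β := not_lt.1 fun hj =>
        hM (mem_image.2 ⟨j, mem_largeBefore.2 ⟨ht', hj⟩, hjM⟩)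
      have hchoice := hg.loadBefore_le hp j M₀
      rw [hjM] at hchoice
      exact add_le_add hchoice hsmall
    · simpa using ih ht'.le

lemma IsGreedy.weightedSmallLoad_le (hg : IsGreedy p σ g) (hp : ∀ i, 0 ≤ p i)
    (hM₀ : loadBefore p σ g n M₀ < β) :
    weightedSmallLoad m p σ β n ≤ loadBefore p σ g n M₀ + β := by
  have hfree : (0 : ℝ) < #(largeMachines p σ g β n)ᶜ := by
    exact_mod_cast card_pos.2
      ⟨M₀, mem_compl.2 (notMem_largeMachines_of_loadBefore_lt hp hM₀ le_rfl)⟩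
  refine (hg.weightedSmallLoad_le_average hp hM₀ n le_rfl).trans ((div_le_iff₀ hfree).2 ?_)
  simpa only [nsmul_eq_mul, mul_comm] using sum_le_card_nsmul _ _ _ fun M hM =>
    hg.loadBefore_le_add_of_notMem_largeMachines hp hM₀ (mem_compl.1 hM) n le_rfl

end Greedy

lemma sum_range_div_eq_weightedSmallLoad {n m : ℕ} {p : Fin n → ℝ} {σ : Equiv.Perm (Fin n)}
    {β : ℝ} {S : ℕ → ℝ}
    (hS : ∀ i, S i = ∑ j ∈ univ.filter (fun j : Fin n => p (σ j) ≤ β ∧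
        (univ.filter (fun j' : Fin n => j' < j ∧ β < p (σ j'))).card = i), p (σ j)) :
    ∑ i ∈ range (#(largeBefore p σ β n) + 1), S i / ((m : ℝ) - i)
      = weightedSmallLoad m p σ β n := by
  have hlarge (j : Fin n) :
      univ.filter (fun j' : Fin n => j' < j ∧ β < p (σ j')) = largeBefore p σ β j := by
    ext j'
    simp
  have hmaps (j : Fin n) (_ : j ∈ univ.filter fun j => p (σ j) ≤ β) :
      #(largeBefore p σ β j) ∈ range (#(largeBefore p σ β n) + 1) :=
    mem_range.2 (Nat.lt_succ_of_le (card_le_card (largeBefore_mono j.isLt.le)))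
  rw [weightedSmallLoad, arrivedBefore_self, ← sum_fiberwise_of_maps_to hmaps]
  refine sum_congr rfl fun i _ => ?_
  rw [hS i, sum_div, filter_filter]
  simp only [hlarge]
  exact sum_congr rfl fun j hj => by rw [(mem_filter.1 hj).2.2]

theorem stmt2_general {n m : ℕ} (hm : 1 ≤ m) (p : Fin n → ℝ) (hp : ∀ i, 0 ≤ p i)
    (β : ℝ)
    (ktilde : ℕ) (hkt : ktilde = (Finset.univ.filter (fun i => β < p i)).card)
    (σ : Equiv.Perm (Fin n)) (g : Fin n → Fin m) (hg : IsGreedy p σ g)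
    (S : ℕ → ℝ)
    (hS : ∀ i, S i = ∑ j ∈ Finset.univ.filter (fun j : Fin n =>
        p (σ j) ≤ β ∧
        (Finset.univ.filter (fun j' : Fin n => j' < j ∧ β < p (σ j'))).card = i), p (σ j)) :
    min ((∑ i ∈ Finset.range (ktilde + 1), S i / ((m : ℝ) - i)) - β) β
      ≤ minLoad p (fun i => g (σ.symm i)) := by
  have : Nonempty (Fin m) := ⟨⟨0, hm⟩⟩
  rw [hkt, ← card_largeBefore_self, sum_range_div_eq_weightedSmallLoad hS]
  refine le_ciInf fun M₀ => ?_
  rw [mcLoad_eq_loadBefore]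
  rcases le_or_gt β (loadBefore p σ g n M₀) with hβM₀ | hM₀β
  · exact min_le_of_right_le hβM₀
  · exact min_le_of_left_le (sub_le_iff_le_add.2 (hg.weightedSmallLoad_le hp hM₀β))

/-- Fix `β ≥ 0`; a job is large if its size exceeds `β`, small otherwise.
If the number `k̃` of large jobs satisfies `k̃ < m` then, for a fixed arrival order and
`S_i` the total size of small jobs preceded by exactly `i` large jobs, every greedy
schedule has minimum load at least `min (Σ_{i=0}^{k̃} S_i/(m−i) − β) β`. -/
theorem stmt2 {n m : ℕ} (hm : 1 ≤ m) (p : Fin n → ℝ) (hp : ∀ i, 0 ≤ p i)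
    (β : ℝ) (hβ : 0 ≤ β)
    (ktilde : ℕ) (hkt : ktilde = (Finset.univ.filter (fun i => β < p i)).card)
    (hkm : ktilde < m)
    (σ : Equiv.Perm (Fin n)) (g : Fin n → Fin m) (hg : IsGreedy p σ g)
    (S : ℕ → ℝ)
    (hS : ∀ i, S i = ∑ j ∈ Finset.univ.filter (fun j : Fin n =>
        p (σ j) ≤ β ∧
        (Finset.univ.filter (fun j' : Fin n => j' < j ∧ β < p (σ j'))).card = i), p (σ j)) :
    min ((∑ i ∈ Finset.range (ktilde + 1), S i / ((m : ℝ) - i)) - β) β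
      ≤ minLoad p (fun i => g (σ.symm i)) :=
  stmt2_general hm p hp β ktilde hkt σ g hg S hS
end

section
/- Let a set of k̃ jobs among n jobs be designated as large, where 0 ≤ k̃ ≤ m−1 and k̃ < n, and let L denote the total size of the small jobs. For a uniformly random permutation σ, let s(J) denote the number of large jobs preceding the small job J in the order J^σ, and set S(J^σ) = Σ_{J small} p_J/(m − s(J)). Then E_σ[S(J^σ)] = ((H_m − H_{m−k̃−1})/(k̃+1)) · L, where H_j is the j-th harmonic number and H_0 = 0. -/
open Finset

/-- The `j`-th harmonic number `H_j = Σ_{i=1}^j 1/i` (so `H_0 = 0`), as a real number. -/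
noncomputable def Hr (j : ℕ) : ℝ := ∑ i ∈ Finset.range j, (1 : ℝ) / (i + 1)

private lemma rank_sum {α β : Type*} [DecidableEq α] [LinearOrder β]
    (f : α → β) (hf : Function.Injective f) (A : Finset α) (h : ℕ → ℝ) :
    ∑ x ∈ A, h ((A.filter (fun i => f i < f x)).card) = ∑ j ∈ Finset.range A.card, h j := by
  classical
  set g : α → ℕ := fun x => (A.filter (fun i => f i < f x)).card with hg
  have hmono : ∀ x ∈ A, ∀ y ∈ A, f x < f y → g x < g y := by
    intro x hx y hy hxy
    apply Finset.card_lt_card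
    constructor
    · intro i hi
      simp only [Finset.mem_filter] at hi ⊢
      exact ⟨hi.1, hi.2.trans hxy⟩
    · intro hsub
      have := hsub (Finset.mem_filter.mpr ⟨hx, hxy⟩)
      simp at this
  have hinj : Set.InjOn g A := by
    intro x hx y hy hxy
    by_contra hne
    have hfne : f x ≠ f y := fun he => hne (hf he)
    rcases hfne.lt_or_gt with hlt | hlt
    · exact absurd hxy (Nat.ne_of_lt (hmono x hx y hy hlt))
    · exact absurd hxy.symm (Nat.ne_of_lt (hmono y hy x hx hlt))
  have hlt : ∀ x ∈ A, g x < A.card := by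
    intro x hx
    have hsub : A.filter (fun i => f i < f x) ⊆ A.erase x := by
      intro i hi
      simp only [Finset.mem_filter] at hi
      exact Finset.mem_erase.mpr ⟨fun he => absurd hi.2 (by simp [he]), hi.1⟩
    calc g x ≤ (A.erase x).card := Finset.card_le_card hsub
      _ < A.card := Finset.card_erase_lt_of_mem hx
  have himg : A.image g = Finset.range A.card := by
    apply Finset.eq_of_subset_of_card_le
    · intro j hj
      simp only [Finset.mem_image] at hj
      obtain ⟨x, hx, rfl⟩ := hj
      exact Finset.mem_range.mpr (hlt x hx)
    · rw [Finset.card_range, Finset.card_image_of_injOn hinj]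
  rw [← himg, Finset.sum_image (fun x hx y hy => hinj hx hy)]

private lemma swap_sum {n : ℕ} (A : Finset (Fin n)) (J x : Fin n) (hJ : J ∈ A) (hx : x ∈ A)
    (h : ℕ → ℝ) :
    ∑ σ : Equiv.Perm (Fin n), h ((A.filter (fun i => σ.symm i < σ.symm J)).card)
      = ∑ σ : Equiv.Perm (Fin n), h ((A.filter (fun i => σ.symm i < σ.symm x)).card) := by
  classical
  set τ := Equiv.swap J x with hτ
  have hmem : ∀ i : Fin n, τ i ∈ A ↔ i ∈ A := by
    intro i
    rcases eq_or_ne i J with rfl | h1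
    · simp [hτ, Equiv.swap_apply_left, hx, hJ]
    rcases eq_or_ne i x with rfl | h2
    · simp [hτ, Equiv.swap_apply_right, hx, hJ]
    · rw [hτ, Equiv.swap_apply_of_ne_of_ne h1 h2]
  apply Fintype.sum_equiv (Equiv.mulLeft τ)
  intro σ
  congr 1
  have hsymm : ∀ i, (τ * σ).symm i = σ.symm (τ i) := by
    intro i
    show (σ.trans τ).symm i = σ.symm (τ i)
    rw [Equiv.symm_trans_apply, Equiv.symm_swap]
  have hτx : τ x = J := Equiv.swap_apply_right J x
  have hset : A.filter (fun i => (τ * σ).symm i < (τ * σ).symm x)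
      = (A.filter (fun i => σ.symm i < σ.symm J)).image τ := by
    ext i
    simp only [Finset.mem_filter, Finset.mem_image, hsymm, hτx]
    constructor
    · rintro ⟨hi, hlt⟩
      exact ⟨τ i, ⟨(hmem i).mpr hi, hlt⟩, by simp [hτ, Equiv.swap_apply_self]⟩
    · rintro ⟨j, ⟨hj, hlt⟩, rfl⟩
      refine ⟨(hmem j).mpr hj, ?_⟩
      simpa [hτ, Equiv.swap_apply_self] using hlt
  show _ = (A.filter (fun i => (τ * σ).symm i < (τ * σ).symm x)).card
  rw [hset, Finset.card_image_of_injective _ τ.injective]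

private lemma harm (m k : ℕ) (hk : k + 1 ≤ m) :
    ∑ j ∈ Finset.range (k + 1), 1 / ((m : ℝ) - j) = Hr m - Hr (m - k - 1) := by
  induction k with
  | zero =>
    have h1 : Hr m = Hr (m - 1) + 1 / (((m - 1 : ℕ) : ℝ) + 1) := by
      conv_lhs => rw [show m = (m - 1) + 1 by omega]
      rw [Hr, Finset.sum_range_succ, ← Hr]
    have hc : ((m - 1 : ℕ) : ℝ) + 1 = (m : ℝ) := by
      rw [Nat.cast_sub (by omega : 1 ≤ m)]; ring
    rw [h1, hc]
    simp
  | succ k ih =>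
    have hk1 : k + 1 ≤ m := by omega
    rw [Finset.sum_range_succ, ih hk1]
    have h1 : Hr (m - k - 1) = Hr (m - k - 2) + 1 / (((m - k - 2 : ℕ) : ℝ) + 1) := by
      conv_lhs => rw [show m - k - 1 = (m - k - 2) + 1 by omega]
      rw [Hr, Finset.sum_range_succ, ← Hr]
    have hc : ((m - k - 2 : ℕ) : ℝ) + 1 = (m : ℝ) - ((k + 1 : ℕ) : ℝ) := by
      rw [show m - k - 2 = m - (k + 2) by omega, Nat.cast_sub (by omega : k + 2 ≤ m)]
      push_cast; ring
    have h2 : m - (k + 1) - 1 = m - k - 2 := by omega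
    rw [h2, h1, hc]
    ring

/-- Let a set of `k̃` jobs among `n` jobs be designated as large, where
`0 ≤ k̃ ≤ m − 1` and `k̃ < n`, and let `L` be the total size of the small jobs. For a
uniformly random permutation `σ` (job `i` arrives at position `σ.symm i`), let `s(J)` be
the number of large jobs preceding the small job `J` and
`S(J^σ) = Σ_{J small} p_J / (m − s(J))`. Then
`E_σ[S(J^σ)] = ((H_m − H_{m−k̃−1})/(k̃+1)) · L`; equivalently, the sum over all
permutations equals `(n)!` times that quantity. -/
theorem stmt4 {n m : ℕ} (hm : 1 ≤ m) (p : Fin n → ℝ) (hp : ∀ i, 0 ≤ p i)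
    (Large : Finset (Fin n)) (ktilde : ℕ) (hcard : Large.card = ktilde)
    (hkm : ktilde + 1 ≤ m) (hkn : ktilde < n)
    (L : ℝ) (hL : L = ∑ J ∈ Largeᶜ, p J) :
    ∑ σ : Equiv.Perm (Fin n), ∑ J ∈ Largeᶜ,
        p J / ((m : ℝ) - (Large.filter (fun i => σ.symm i < σ.symm J)).card)
      = (Fintype.card (Equiv.Perm (Fin n)) : ℝ)
          * ((Hr m - Hr (m - ktilde - 1)) / (ktilde + 1)) * L := by
  classical
  subst hL
  set h : ℕ → ℝ := fun j => 1 / ((m : ℝ) - j) with hh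
  set C : ℝ := (Fintype.card (Equiv.Perm (Fin n)) : ℝ) with hC
  set Q : ℝ := (Hr m - Hr (m - ktilde - 1)) / (ktilde + 1) with hQ
  have key : ∀ J ∈ Largeᶜ,
      ∑ σ : Equiv.Perm (Fin n),
          h ((Large.filter (fun i => σ.symm i < σ.symm J)).card) = C * Q := by
    intro J hJ
    have hJL : J ∉ Large := Finset.mem_compl.mp hJ
    set A := insert J Large with hA
    have hAcard : A.card = ktilde + 1 := by
      rw [hA, Finset.card_insert_of_notMem hJL, hcard]
    have hfilter : ∀ σ : Equiv.Perm (Fin n),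
        Large.filter (fun i => σ.symm i < σ.symm J)
          = A.filter (fun i => σ.symm i < σ.symm J) := by
      intro σ
      rw [hA, Finset.filter_insert, if_neg (lt_irrefl _)]
    have hrank : ∀ σ : Equiv.Perm (Fin n),
        ∑ x ∈ A, h ((A.filter (fun i => σ.symm i < σ.symm x)).card)
          = ∑ j ∈ Finset.range (ktilde + 1), h j := by
      intro σ
      rw [rank_sum σ.symm σ.symm.injective A h, hAcard]
    have hswap : ∀ x ∈ A,
        ∑ σ : Equiv.Perm (Fin n), h ((A.filter (fun i => σ.symm i < σ.symm x)).card)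
          = ∑ σ : Equiv.Perm (Fin n), h ((A.filter (fun i => σ.symm i < σ.symm J)).card) :=
      fun x hx => (swap_sum A J x (Finset.mem_insert_self _ _) hx h).symm
    have hmain : ((ktilde : ℝ) + 1)
        * ∑ σ : Equiv.Perm (Fin n), h ((A.filter (fun i => σ.symm i < σ.symm J)).card)
        = C * ∑ j ∈ Finset.range (ktilde + 1), h j := by
      have h1 : ∑ x ∈ A, ∑ σ : Equiv.Perm (Fin n),
            h ((A.filter (fun i => σ.symm i < σ.symm x)).card)
          = ((ktilde : ℝ) + 1)
            * ∑ σ : Equiv.Perm (Fin n), h ((A.filter (fun i => σ.symm i < σ.symm J)).card) := by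
        rw [Finset.sum_congr rfl hswap, Finset.sum_const, hAcard, nsmul_eq_mul]
        push_cast; ring
      have h2 : ∑ x ∈ A, ∑ σ : Equiv.Perm (Fin n),
            h ((A.filter (fun i => σ.symm i < σ.symm x)).card)
          = C * ∑ j ∈ Finset.range (ktilde + 1), h j := by
        rw [Finset.sum_comm]
        rw [Finset.sum_congr rfl (fun σ _ => hrank σ), Finset.sum_const, nsmul_eq_mul]
        rfl
      rw [← h1, h2]
    have hk0 : ((ktilde : ℝ) + 1) ≠ 0 := by positivity
    have hS : ∑ j ∈ Finset.range (ktilde + 1), h j = Hr m - Hr (m - ktilde - 1) := by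
      rw [hh]
      exact harm m ktilde hkm
    calc ∑ σ : Equiv.Perm (Fin n), h ((Large.filter (fun i => σ.symm i < σ.symm J)).card)
        = ∑ σ : Equiv.Perm (Fin n), h ((A.filter (fun i => σ.symm i < σ.symm J)).card) := by
          exact Finset.sum_congr rfl fun σ _ => by rw [hfilter σ]
      _ = C * Q := by
          rw [hQ, ← hS]
          field_simp at hmain ⊢
          linarith [hmain]
  rw [Finset.sum_comm]
  have hterm : ∀ J ∈ Largeᶜ,
      ∑ σ : Equiv.Perm (Fin n),
          p J / ((m : ℝ) - (Large.filter (fun i => σ.symm i < σ.symm J)).card)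
        = p J * (C * Q) := by
    intro J hJ
    rw [← key J hJ, Finset.mul_sum]
    exact Finset.sum_congr rfl fun σ _ => by rw [hh]; ring
  rw [Finset.sum_congr rfl hterm, ← Finset.sum_mul]
  ring
end

section
/- Let a set of k̃ jobs among n jobs be designated as large, where k̃ ≤ m−1, k̃ ≥ m − H_m, and k̃ + 1 ≥ m/2, and let L denote the total size of the small jobs. For a uniformly random permutation σ, let s(J) denote the number of large jobs preceding the small job J, and set S(J^σ) = Σ_{J small} p_J/(m − s(J)). Then Var_σ[S(J^σ)] ≤ (π²/3) · (H_m²/m) · (L/(m−k̃))². -/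
/-!
Centre `S` at `L / m` rather than at its mean: the variance is at most the second moment about
any point, and `S σ - L / m = ∑_J p_J (1 / (m - s(J)) - 1 / m)`. By Cauchy–Schwarz with weights
`p_J`, this second moment is at most `L²` times the largest per-job second moment of
`1 / (m - s(J)) - 1 / m`. Inside `T = {J} ∪ Large`, the rank `s(J)` of `J` is uniform on
`{0, …, k̃}`: composing the order with a transposition exchanges the ranks of two elements of `T`,
and for each order the ranks of `T` run through `{0, …, #T - 1}`. So the per-job moment is at
most `(1 / (k̃ + 1)) ∑_{t ≥ 1} 1 / t² ≤ (2 / m) · π² / 6`. Finally `1 ≤ m - k̃ ≤ H_m` turns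
`L²` into `H_m² (L / (m - k̃))²`.
-/

open Finset

section Rank

variable {α β : Type*} [LinearOrder β]

def rankIn (T : Finset α) (f : α → β) (x : α) : ℕ := #{i ∈ T | f i < f x}

variable {T : Finset α} {f : α → β}

lemma rankIn_lt_card {x : α} (hx : x ∈ T) : rankIn T f x < #T :=
  card_lt_card <| filter_ssubset.2 ⟨x, hx, lt_irrefl _⟩

lemma rankIn_lt_rankIn {x y : α} (hx : x ∈ T) (hxy : f x < f y) :
    rankIn T f x < rankIn T f y := by
  refine card_lt_card ⟨fun i hi => ?_, fun h => ?_⟩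
  · rw [mem_filter] at hi ⊢
    exact ⟨hi.1, hi.2.trans hxy⟩
  · exact lt_irrefl _ (mem_filter.1 (h (mem_filter.2 ⟨hx, hxy⟩))).2

lemma rankIn_injOn (hf : Function.Injective f) : Set.InjOn (rankIn T f) T := by
  intro x hx y hy hxy
  by_contra hne
  rcases (hf.ne hne).lt_or_gt with h | h
  · exact (rankIn_lt_rankIn hx h).ne hxy
  · exact (rankIn_lt_rankIn hy h).ne' hxy

lemma image_rankIn (hf : Function.Injective f) : T.image (rankIn T f) = range #T :=
  eq_of_subset_of_card_le (fun _ hs => by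
      obtain ⟨x, hx, rfl⟩ := mem_image.1 hs
      exact mem_range.2 (rankIn_lt_card hx))
    (by rw [card_range, card_image_of_injOn (rankIn_injOn hf)])

lemma sum_rankIn {M : Type*} [AddCommMonoid M] (hf : Function.Injective f) (g : ℕ → M) :
    ∑ x ∈ T, g (rankIn T f x) = ∑ s ∈ range #T, g s := by
  rw [← image_rankIn hf, sum_image (rankIn_injOn hf)]

lemma swap_apply_mem [DecidableEq α] {a b x : α} (ha : a ∈ T) (hb : b ∈ T) (hx : x ∈ T) :
    Equiv.swap a b x ∈ T := by
  rw [Equiv.swap_apply_def]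
  split_ifs <;> assumption

lemma rankIn_comp_swap [DecidableEq α] {a b : α} (ha : a ∈ T) (hb : b ∈ T) :
    rankIn T (f ∘ Equiv.swap a b) a = rankIn T f b := by
  refine card_nbij' (Equiv.swap a b) (Equiv.swap a b) (fun i hi => ?_) (fun i hi => ?_)
    (fun i _ => Equiv.swap_apply_self a b i) (fun i _ => Equiv.swap_apply_self a b i)
  · simp only [coe_filter, Set.mem_ofPred_eq, Function.comp_apply,
      Equiv.swap_apply_left] at hi ⊢
    exact ⟨swap_apply_mem ha hb hi.1, hi.2⟩
  · simp only [coe_filter, Set.mem_ofPred_eq, Function.comp_apply, Equiv.swap_apply_left,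
      Equiv.swap_apply_self] at hi ⊢
    exact ⟨swap_apply_mem ha hb hi.1, hi.2⟩

lemma rankIn_insert_self [DecidableEq α] (x : α) : rankIn (insert x T) f x = rankIn T f x := by
  rw [rankIn, rankIn, filter_insert, if_neg (lt_irrefl _)]

end Rank

section Moments

lemma sq_one_div_sub_one_div_le {t m : ℝ} (ht : 0 < t) (htm : t ≤ m) :
    (1 / t - 1 / m) ^ 2 ≤ 1 / t ^ 2 := by
  have h0 : 0 ≤ 1 / m := by have := ht.trans_le htm; positivity
  have h1 : 1 / m ≤ 1 / t := one_div_le_one_div_of_le ht htm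
  rw [← one_div_pow]
  nlinarith

lemma sum_range_one_div_sub_sq_le_pi_sq_div_six {m r : ℕ} (hrm : r ≤ m) :
    ∑ s ∈ range r, 1 / ((m : ℝ) - s) ^ 2 ≤ Real.pi ^ 2 / 6 := by
  have hcast : ∀ s ∈ range r, ((m : ℝ) - s) = ((m - s : ℕ) : ℝ) := fun s hs => by
    rw [Nat.cast_sub (by have := mem_range.1 hs; omega)]
  calc ∑ s ∈ range r, 1 / ((m : ℝ) - s) ^ 2
      = ∑ t ∈ (range r).image (m - ·), 1 / (t : ℝ) ^ 2 := by
        rw [sum_image fun x hx y hy h => by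
          have := mem_range.1 hx; have := mem_range.1 hy; omega]
        exact sum_congr rfl fun s hs => by rw [hcast s hs]
    _ ≤ ∑' t : ℕ, 1 / (t : ℝ) ^ 2 :=
        hasSum_zeta_two.summable.sum_le_tsum _ fun _ _ => by positivity
    _ = Real.pi ^ 2 / 6 := hasSum_zeta_two.tsum_eq

lemma sum_range_sq_one_div_sub_one_div_le {m r : ℕ} (hrm : r ≤ m) :
    ∑ s ∈ range r, (1 / ((m : ℝ) - s) - 1 / m) ^ 2 ≤ Real.pi ^ 2 / 6 := by
  refine le_trans (sum_le_sum fun s hs => sq_one_div_sub_one_div_le ?_ ?_)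
    (sum_range_one_div_sub_sq_le_pi_sq_div_six hrm)
  · have : (s : ℝ) + 1 ≤ m := by exact_mod_cast (mem_range.1 hs).trans_le hrm
    linarith
  · have := s.cast_nonneg (α := ℝ)
    linarith

lemma sum_sq_sum_mul_le {ι Ω : Type*} (s : Finset ι) (t : Finset Ω) {p : ι → ℝ}
    (hp : ∀ i ∈ s, 0 ≤ p i) (d : ι → Ω → ℝ) {C : ℝ}
    (hC : ∀ i ∈ s, ∑ ω ∈ t, d i ω ^ 2 ≤ C) :
    ∑ ω ∈ t, (∑ i ∈ s, p i * d i ω) ^ 2 ≤ (∑ i ∈ s, p i) ^ 2 * C := by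
  have hP : 0 ≤ ∑ i ∈ s, p i := sum_nonneg hp
  have cauchySchwarz : ∀ ω, (∑ i ∈ s, p i * d i ω) ^ 2
      ≤ (∑ i ∈ s, p i) * ∑ i ∈ s, p i * d i ω ^ 2 := fun ω =>
    sum_sq_le_sum_mul_sum_of_sq_le_mul s hp (fun i hi => mul_nonneg (hp i hi) (sq_nonneg _))
      fun i _ => le_of_eq (by ring)
  calc ∑ ω ∈ t, (∑ i ∈ s, p i * d i ω) ^ 2
      ≤ ∑ ω ∈ t, (∑ i ∈ s, p i) * ∑ i ∈ s, p i * d i ω ^ 2 :=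
        sum_le_sum fun ω _ => cauchySchwarz ω
    _ = (∑ i ∈ s, p i) * ∑ i ∈ s, p i * ∑ ω ∈ t, d i ω ^ 2 := by
        rw [← mul_sum, sum_comm]
        simp only [mul_sum]
    _ ≤ (∑ i ∈ s, p i) * ∑ i ∈ s, p i * C := by
        gcongr with i hi
        exacts [hp i hi, hC i hi]
    _ = (∑ i ∈ s, p i) ^ 2 * C := by rw [← sum_mul]; ring

lemma sum_sq_div_card_sub_sq_le {Ω : Type*} [Fintype Ω] [Nonempty Ω] (f : Ω → ℝ) (a : ℝ) :
    (∑ ω, f ω ^ 2) / Fintype.card Ω - ((∑ ω, f ω) / Fintype.card Ω) ^ 2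
      ≤ (∑ ω, (f ω - a) ^ 2) / Fintype.card Ω := by
  have hN : (0 : ℝ) < Fintype.card Ω := by exact_mod_cast Fintype.card_pos
  have expand : ∑ ω, (f ω - a) ^ 2
      = ∑ ω, f ω ^ 2 - 2 * a * ∑ ω, f ω + Fintype.card Ω * a ^ 2 := by
    simp only [sub_sq, sum_add_distrib, sum_sub_distrib, mul_sum, sum_const, card_univ,
      nsmul_eq_mul]
    simp only [mul_assoc, mul_comm a]
  rw [expand, add_div, sub_div, mul_div_assoc, mul_div_cancel_left₀ _ hN.ne']
  nlinarith [sq_nonneg ((∑ ω, f ω) / Fintype.card Ω - a)]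

end Moments

section RandomOrder

variable {α : Type*} [Fintype α] [LinearOrder α]

open Equiv in
lemma sum_perm_rankIn_eq (T : Finset α) {a b : α} (ha : a ∈ T) (hb : b ∈ T)
    {M : Type*} [AddCommMonoid M] (g : ℕ → M) :
    ∑ σ : Perm α, g (rankIn T σ.symm a) = ∑ σ : Perm α, g (rankIn T σ.symm b) := by
  refine Fintype.sum_equiv (Equiv.mulLeft (swap a b)) _ _ fun σ => ?_
  have : ⇑(swap a b * σ).symm = σ.symm ∘ swap a b := by
    ext x; simp [Perm.mul_def]
  rw [Equiv.coe_mulLeft, this, swap_comm, rankIn_comp_swap hb ha]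

lemma card_mul_sum_perm_rankIn (T : Finset α) {a : α} (ha : a ∈ T) (g : ℕ → ℝ) :
    #T * ∑ σ : Equiv.Perm α, g (rankIn T σ.symm a)
      = Fintype.card (Equiv.Perm α) * ∑ s ∈ range #T, g s := by
  calc (#T : ℝ) * ∑ σ : Equiv.Perm α, g (rankIn T σ.symm a)
      = ∑ b ∈ T, ∑ σ : Equiv.Perm α, g (rankIn T σ.symm b) := by
        rw [← nsmul_eq_mul, ← sum_const]
        exact sum_congr rfl fun b hb => sum_perm_rankIn_eq T ha hb g
    _ = ∑ σ : Equiv.Perm α, ∑ s ∈ range #T, g s := by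
        rw [sum_comm]
        exact sum_congr rfl fun σ _ => sum_rankIn σ.symm.injective g
    _ = _ := by rw [sum_const, card_univ, nsmul_eq_mul]

lemma sum_perm_sq_one_div_sub_rankIn_le {T : Finset α} {a : α} (ha : a ∈ T) {m : ℕ}
    (hTm : #T ≤ m) (hmT : (m : ℝ) ≤ 2 * #T) :
    ∑ σ : Equiv.Perm α, (1 / ((m : ℝ) - rankIn T σ.symm a) - 1 / m) ^ 2
      ≤ Fintype.card (Equiv.Perm α) * (Real.pi ^ 2 / (3 * m)) := by
  set Q := ∑ σ : Equiv.Perm α, (1 / ((m : ℝ) - rankIn T σ.symm a) - 1 / m) ^ 2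
  have hm : (0 : ℝ) < m := by exact_mod_cast (card_pos.2 ⟨a, ha⟩).trans_le hTm
  have hQ : 0 ≤ Q := sum_nonneg fun _ _ => sq_nonneg _
  have uniform : #T * Q ≤ Fintype.card (Equiv.Perm α) * (Real.pi ^ 2 / 6) := by
    rw [card_mul_sum_perm_rankIn T ha (fun s => (1 / ((m : ℝ) - s) - 1 / m) ^ 2)]
    exact mul_le_mul_of_nonneg_left (sum_range_sq_one_div_sub_one_div_le hTm) (by positivity)
  rw [mul_div_assoc', le_div_iff₀ (by positivity)]
  nlinarith [mul_le_mul_of_nonneg_right hmT hQ]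

end RandomOrder

lemma sq_le_sq_mul_div_sq {x H : ℝ} (hx : 0 < x) (hxH : x ≤ H) (L : ℝ) :
    L ^ 2 ≤ H ^ 2 * (L / x) ^ 2 := by
  rw [div_pow, mul_div_assoc', le_div_iff₀ (by positivity), mul_comm (H ^ 2)]
  gcongr

theorem stmt5_general {n m : ℕ} (p : Fin n → ℝ) (hp : ∀ i, 0 ≤ p i)
    (Large : Finset (Fin n)) (ktilde : ℕ) (hcard : Large.card = ktilde)
    (hkm : ktilde + 1 ≤ m)
    (hk1 : (m : ℝ) - Hr m ≤ ktilde) (hk2 : (m : ℝ) / 2 ≤ (ktilde : ℝ) + 1)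
    (L : ℝ) (hL : L = ∑ J ∈ Largeᶜ, p J)
    (S : Equiv.Perm (Fin n) → ℝ)
    (hS : ∀ σ, S σ = ∑ J ∈ Largeᶜ,
        p J / ((m : ℝ) - (Large.filter (fun i => σ.symm i < σ.symm J)).card)) :
    (∑ σ : Equiv.Perm (Fin n), (S σ) ^ 2) / (Fintype.card (Equiv.Perm (Fin n)) : ℝ)
        - ((∑ σ : Equiv.Perm (Fin n), S σ) / (Fintype.card (Equiv.Perm (Fin n)) : ℝ)) ^ 2
      ≤ Real.pi ^ 2 / 3 * ((Hr m) ^ 2 / m) * (L / ((m : ℝ) - ktilde)) ^ 2 := by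
  set N : ℝ := (Fintype.card (Equiv.Perm (Fin n)) : ℝ)
  set d : Fin n → Equiv.Perm (Fin n) → ℝ := fun J σ =>
    1 / ((m : ℝ) - rankIn Large σ.symm J) - 1 / m
  have hN : 0 < N := Nat.cast_pos.2 Fintype.card_pos
  have hk : (ktilde : ℝ) + 1 ≤ m := by exact_mod_cast hkm
  have centered : ∀ σ, S σ - L / m = ∑ J ∈ Largeᶜ, p J * d J σ := fun σ => by
    simp only [hS, hL, sum_div, ← sum_sub_distrib, d, rankIn]
    exact sum_congr rfl fun J _ => by ring
  have perJob : ∀ J ∈ Largeᶜ, ∑ σ, d J σ ^ 2 ≤ N * (Real.pi ^ 2 / (3 * m)) := fun J hJ => by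
    have hT : #(insert J Large) = ktilde + 1 := by
      rw [card_insert_of_notMem (mem_compl.1 hJ), hcard]
    simpa only [d, rankIn_insert_self] using sum_perm_sq_one_div_sub_rankIn_le
      (mem_insert_self J Large) (by omega) (by rw [hT]; push_cast; linarith)
  calc _ ≤ (∑ σ, (S σ - L / m) ^ 2) / N := sum_sq_div_card_sub_sq_le S (L / m)
    _ ≤ L ^ 2 * (N * (Real.pi ^ 2 / (3 * m))) / N := by
        simp only [centered]
        rw [hL]
        gcongr
        exact sum_sq_sum_mul_le _ _ (fun i _ => hp i) d perJob
    _ = Real.pi ^ 2 / (3 * m) * L ^ 2 := by field_simp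
    _ ≤ Real.pi ^ 2 / (3 * m) * (Hr m ^ 2 * (L / ((m : ℝ) - ktilde)) ^ 2) := by
        gcongr
        exact sq_le_sq_mul_div_sq (by linarith) (by linarith) L
    _ = _ := by ring

/-- Let a set of `k̃` jobs among `n` jobs be designated as large, where
`k̃ ≤ m − 1`, `k̃ ≥ m − H_m` and `k̃ + 1 ≥ m/2`, and let `L` be the total size of the
small jobs. For a uniformly random permutation `σ`, with `s(J)` the number of large jobs
preceding the small job `J` and `S(J^σ) = Σ_{J small} p_J / (m − s(J))`, the variance of
`S` satisfies `Var_σ[S(J^σ)] ≤ (π²/3) · (H_m²/m) · (L/(m−k̃))²`. -/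
theorem stmt5 {n m : ℕ} (hm : 1 ≤ m) (p : Fin n → ℝ) (hp : ∀ i, 0 ≤ p i)
    (Large : Finset (Fin n)) (ktilde : ℕ) (hcard : Large.card = ktilde)
    (hkm : ktilde + 1 ≤ m) (hkn : ktilde < n)
    (hk1 : (m : ℝ) - Hr m ≤ ktilde) (hk2 : (m : ℝ) / 2 ≤ (ktilde : ℝ) + 1)
    (L : ℝ) (hL : L = ∑ J ∈ Largeᶜ, p J)
    (S : Equiv.Perm (Fin n) → ℝ)
    (hS : ∀ σ, S σ = ∑ J ∈ Largeᶜ,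
        p J / ((m : ℝ) - (Large.filter (fun i => σ.symm i < σ.symm J)).card)) :
    (∑ σ : Equiv.Perm (Fin n), (S σ) ^ 2) / (Fintype.card (Equiv.Perm (Fin n)) : ℝ)
        - ((∑ σ : Equiv.Perm (Fin n), S σ) / (Fintype.card (Equiv.Perm (Fin n)) : ℝ)) ^ 2
      ≤ Real.pi ^ 2 / 3 * ((Hr m) ^ 2 / m) * (L / ((m : ℝ) - ktilde)) ^ 2 :=
  stmt5_general p hp Large ktilde hcard hkm hk1 hk2 L hL S hS
end

section
/- Call a job large if its size exceeds OPT/(100·m^{1/4}) and let k be the number of large jobs. If the instance is simple — that is, n < m, or k ≥ m, or k ≤ m − m^{3/4}/50 — then for every arrival order, every greedy schedule has minimum load at least OPT/(100·m^{1/4}). -/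
open Finset

/-- The optimal (offline) minimum load of the instance. -/
noncomputable def OPT {n : ℕ} (m : ℕ) (p : Fin n → ℝ) : ℝ :=
  ⨆ f : Fin n → Fin m, minLoad p f

/-- Call a job large if its size exceeds `OPT/(100·m^{1/4})` and let `k` be
the number of large jobs. If the instance is simple — `n < m`, or `k ≥ m`, or
`k ≤ m − m^{3/4}/50` — then for every arrival order, every greedy schedule has minimum
load at least `OPT/(100·m^{1/4})`. -/
theorem stmt7 {n m : ℕ} (hm : 1 ≤ m) (p : Fin n → ℝ) (hp : ∀ i, 0 ≤ p i)
    (k : ℕ)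
    (hk : k = (Finset.univ.filter
      (fun i => OPT m p / (100 * (m : ℝ) ^ ((1 : ℝ) / 4)) < p i)).card)
    (hsimple : n < m ∨ m ≤ k ∨ (k : ℝ) ≤ (m : ℝ) - (m : ℝ) ^ ((3 : ℝ) / 4) / 50)
    (σ : Equiv.Perm (Fin n)) (g : Fin n → Fin m) (hg : IsGreedy p σ g) :
    OPT m p / (100 * (m : ℝ) ^ ((1 : ℝ) / 4)) ≤ minLoad p (fun i => g (σ.symm i)) := by
  have hmne : NeZero m := ⟨by omega⟩
  set c : ℝ := OPT m p / (100 * (m : ℝ) ^ ((1 : ℝ) / 4)) with hc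
  set f : Fin n → Fin m := fun i => g (σ.symm i) with hf
  have hm0 : (0:ℝ) < m := by exact_mod_cast hm
  have hden : (0:ℝ) < 100 * (m:ℝ) ^ ((1:ℝ)/4) := by positivity
  have mc_nonneg : ∀ (h : Fin n → Fin m) (M : Fin m), 0 ≤ mcLoad p h M := fun h M =>
    Finset.sum_nonneg fun i _ => hp i
  have minLoad_le : ∀ (h : Fin n → Fin m) (M : Fin m), minLoad p h ≤ mcLoad p h M :=
    fun h M => ciInf_le (Finite.bddBelow_range _) M
  have minLoad_nn : ∀ h : Fin n → Fin m, 0 ≤ minLoad p h := fun h =>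
    le_ciInf fun M => mc_nonneg h M
  have hOPT0 : 0 ≤ OPT m p := by
    have h1 : minLoad p (fun _ => (⟨0, by omega⟩ : Fin m)) ≤ OPT m p :=
      le_ciSup (Finite.bddAbove_range _) _
    linarith [minLoad_nn (fun _ => (⟨0, by omega⟩ : Fin m))]
  by_contra hcon
  push_neg at hcon
  have hL0 : 0 ≤ minLoad p f := minLoad_nn f
  have hcpos : 0 < c := lt_of_le_of_lt hL0 hcon
  -- final load expressed via positions
  have hmc : ∀ M, mcLoad p f M = ∑ j ∈ Finset.univ.filter (fun j => g j = M), p (σ j) := by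
    intro M
    rw [mcLoad, Finset.sum_filter, Finset.sum_filter, ← Equiv.sum_comp σ
      (fun i => if f i = M then p i else 0)]
    simp [hf]
  have pref_le_mc : ∀ (t : Fin n) (M : Fin m), prefLoad p σ g t M ≤ mcLoad p f M := by
    intro t M
    rw [hmc, prefLoad]
    apply Finset.sum_le_sum_of_subset_of_nonneg
    · intro j hj
      simp only [Finset.mem_filter, Finset.mem_univ, true_and] at hj ⊢
      exact hj.2
    · intro j _ _; exact hp _
  have key : ∀ t : Fin n, prefLoad p σ g t (g t) ≤ minLoad p f :=
    fun t => le_ciInf fun M => (hg t M).trans (pref_le_mc t M)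
  -- two large jobs never share a machine
  have step : ∀ t1 t2 : Fin n, t1 < t2 → c < p (σ t1) → g t1 = g t2 → False := by
    intro t1 t2 hlt h1 he
    have h2 : p (σ t1) ≤ prefLoad p σ g t2 (g t2) := by
      rw [prefLoad]
      apply Finset.single_le_sum (f := fun j => p (σ j)) (fun i _ => hp _)
      simp [hlt, he]
    linarith [key t2]
  rcases hsimple with hnm | hmk | hsmall
  · -- n < m : OPT = 0
    have hOPTle : OPT m p ≤ 0 := by
      apply ciSup_le
      intro h
      have : ¬ Function.Surjective h := by
        intro hs
        have := Fintype.card_le_of_surjective h hs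
        simp at this; omega
      rw [Function.Surjective] at this
      push_neg at this
      obtain ⟨M, hM⟩ := this
      have hz : mcLoad p h M = 0 := by
        rw [mcLoad]
        apply Finset.sum_eq_zero
        intro i hi
        simp only [Finset.mem_filter] at hi
        exact absurd hi.2 (hM i)
      linarith [minLoad_le h M]
    have : c ≤ 0 := by
      rw [hc]; exact div_nonpos_of_nonpos_of_nonneg hOPTle hden.le
    linarith
  · -- m ≤ k : every machine receives a large job
    set T : Finset (Fin n) := Finset.univ.filter (fun t => c < p (σ t)) with hT
    have hTcard : T.card = k := by
      rw [hk]
      apply Finset.card_bij (fun t _ => σ t)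
      · intro t ht
        simp only [hT, Finset.mem_filter, Finset.mem_univ, true_and] at ht ⊢
        exact ht
      · intro t1 _ t2 _ h; exact σ.injective h
      · intro i hi
        refine ⟨σ.symm i, ?_, by simp⟩
        simp only [hT, Finset.mem_filter, Finset.mem_univ, true_and] at hi ⊢
        simpa using hi
    have hinj : Set.InjOn g T := by
      intro t1 h1 t2 h2 he
      by_contra hne
      simp only [hT, Finset.coe_filter, Set.mem_setOf_eq] at h1 h2
      rcases lt_or_gt_of_ne hne with h | h
      · exact step t1 t2 h h1.2 he
      · exact step t2 t1 h h2.2 he.symm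
    have himg : T.image g = Finset.univ := by
      apply Finset.eq_univ_of_card
      have h1 : (T.image g).card = T.card := Finset.card_image_of_injOn hinj
      have h2 : (T.image g).card ≤ Fintype.card (Fin m) := by
        simpa using Finset.card_le_univ (T.image g)
      simp only [Fintype.card_fin] at h2 ⊢
      omega
    have hall : ∀ M : Fin m, c < mcLoad p f M := by
      intro M
      have : M ∈ T.image g := himg ▸ Finset.mem_univ M
      obtain ⟨t, ht, hgt⟩ := Finset.mem_image.1 this
      simp only [hT, Finset.mem_filter, Finset.mem_univ, true_and] at ht
      have : p (σ t) ≤ mcLoad p f M := by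
        rw [hmc]
        apply Finset.single_le_sum (f := fun j => p (σ j)) (fun i _ => hp _)
        simp [hgt]
      linarith
    have : c ≤ minLoad p f := le_ciInf fun M => le_of_lt (hall M)
    linarith
  · -- k small
    obtain ⟨fs, hfs⟩ := Finite.exists_max (fun h : Fin n → Fin m => minLoad p h)
    have hOPTle : OPT m p ≤ minLoad p fs := ciSup_le hfs
    have hOPTM : ∀ M, OPT m p ≤ mcLoad p fs M := fun M => hOPTle.trans (minLoad_le fs M)
    set B : Finset (Fin m) := Finset.univ.filter (fun M => ∀ i, fs i = M → p i ≤ c) with hB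
    set Bc : Finset (Fin m) := Finset.univ.filter (fun M => ¬ ∀ i, fs i = M → p i ≤ c) with hBc
    have hBcsub : Bc ⊆ (Finset.univ.filter (fun i => c < p i)).image fs := by
      intro M hM
      simp only [hBc, Finset.mem_filter, Finset.mem_univ, true_and] at hM
      push_neg at hM
      obtain ⟨i, hfi, hpi⟩ := hM
      exact Finset.mem_image.2 ⟨i, Finset.mem_filter.2 ⟨Finset.mem_univ i, hpi⟩, hfi⟩
    have hBccard : Bc.card ≤ k := by
      rw [hk]
      exact le_trans (Finset.card_le_card hBcsub) (Finset.card_image_le)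
    have hBcard : B.card + Bc.card = m := by
      have := Finset.card_filter_add_card_filter_not
        (s := (Finset.univ : Finset (Fin m))) (p := fun M => ∀ i, fs i = M → p i ≤ c)
      simpa [hB, hBc] using this
    have hBreal : (m:ℝ) - k ≤ (B.card : ℝ) := by
      have : m - k ≤ B.card := by omega
      have hkm : k ≤ m ∨ m ≤ k := le_total k m
      rcases hkm with h | h
      · have : (B.card : ℝ) ≥ ((m - k : ℕ) : ℝ) := by exact_mod_cast this
        rw [Nat.cast_sub h] at this; linarith
      · have : (0:ℝ) ≤ (B.card:ℝ) := Nat.cast_nonneg _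
        have hkm' : (m:ℝ) ≤ k := by exact_mod_cast h
        linarith
    set S : ℝ := ∑ i ∈ Finset.univ.filter (fun i => p i ≤ c), p i with hS
    -- lower bound on S
    have hlow : (B.card : ℝ) * OPT m p ≤ S := by
      have h1 : ∀ M ∈ B, OPT m p ≤ mcLoad p fs M := fun M _ => hOPTM M
      have h2 : (B.card : ℝ) * OPT m p ≤ ∑ M ∈ B, mcLoad p fs M := by
        calc (B.card : ℝ) * OPT m p = ∑ _M ∈ B, OPT m p := by
              rw [Finset.sum_const, nsmul_eq_mul]
          _ ≤ ∑ M ∈ B, mcLoad p fs M := Finset.sum_le_sum h1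
      have h3 : ∑ M ∈ B, mcLoad p fs M
          = ∑ i ∈ Finset.univ.filter (fun i => fs i ∈ B), p i := by
        simp only [mcLoad]
        exact Finset.sum_fiberwise_eq_sum_filter _ _ _ _
      have h4 : ∑ i ∈ Finset.univ.filter (fun i => fs i ∈ B), p i ≤ S := by
        apply Finset.sum_le_sum_of_subset_of_nonneg
        · intro i hi
          simp only [hB, Finset.mem_filter, Finset.mem_univ, true_and] at hi ⊢
          exact hi i rfl
        · intro i _ _; exact hp i
      linarith
    -- upper bound on S
    have hup : S ≤ (m:ℝ) * (minLoad p f + c) := by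
      have hre : S = ∑ j ∈ Finset.univ.filter (fun j => p (σ j) ≤ c), p (σ j) := by
        rw [hS, Finset.sum_filter, Finset.sum_filter,
          ← Equiv.sum_comp σ (fun i => if p i ≤ c then p i else 0)]
      have hfib : ∑ j ∈ Finset.univ.filter (fun j => p (σ j) ≤ c), p (σ j)
          = ∑ M : Fin m, ∑ j ∈ (Finset.univ.filter (fun j => p (σ j) ≤ c)).filter
              (fun j => g j = M), p (σ j) :=
        (Finset.sum_fiberwise _ g _).symm
      have hbound : ∀ M : Fin m,
          ∑ j ∈ (Finset.univ.filter (fun j => p (σ j) ≤ c)).filter (fun j => g j = M),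
            p (σ j) ≤ minLoad p f + c := by
        intro M
        set A := (Finset.univ.filter (fun j => p (σ j) ≤ c)).filter (fun j => g j = M) with hA
        rcases Finset.eq_empty_or_nonempty A with hAe | hAne
        · rw [hAe]; simp; linarith
        · set t := A.max' hAne with ht
          have htA : t ∈ A := A.max'_mem hAne
          have htprops : p (σ t) ≤ c ∧ g t = M := by
            simpa [hA] using htA
          have hsplit : ∑ j ∈ A, p (σ j) = p (σ t) + ∑ j ∈ A.erase t, p (σ j) :=
            (Finset.add_sum_erase A (fun j => p (σ j)) htA).symm
          have herase : ∑ j ∈ A.erase t, p (σ j) ≤ prefLoad p σ g t M := by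
            rw [prefLoad]
            apply Finset.sum_le_sum_of_subset_of_nonneg
            · intro j hj
              have hj' := Finset.mem_of_mem_erase hj
              have hjne := Finset.ne_of_mem_erase hj
              simp only [hA, Finset.mem_filter, Finset.mem_univ, true_and] at hj' ⊢
              exact ⟨lt_of_le_of_ne (A.le_max' j (Finset.mem_of_mem_erase hj)) hjne, hj'.2⟩
            · intro j _ _; exact hp _
          have hpref : prefLoad p σ g t M ≤ minLoad p f := by
            rw [← htprops.2]; exact key t
          linarith [htprops.1]
      calc S = ∑ M : Fin m, ∑ j ∈ (Finset.univ.filter (fun j => p (σ j) ≤ c)).filter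
              (fun j => g j = M), p (σ j) := by rw [hre, hfib]
        _ ≤ ∑ _M : Fin m, (minLoad p f + c) := Finset.sum_le_sum fun M _ => hbound M
        _ = (m:ℝ) * (minLoad p f + c) := by simp [mul_comm]; ring
    -- arithmetic contradiction
    have hpow : (m:ℝ) ^ ((3:ℝ)/4) * (m:ℝ) ^ ((1:ℝ)/4) = m := by
      rw [← Real.rpow_add hm0]
      norm_num
    have hcc : c * (100 * (m:ℝ) ^ ((1:ℝ)/4)) = OPT m p := by
      rw [hc]; field_simp
    have heq : 2 * (m:ℝ) * c = (m:ℝ) ^ ((3:ℝ)/4) / 50 * OPT m p := by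
      rw [← hcc]; nlinarith [hpow]
    have h1 : (m:ℝ) ^ ((3:ℝ)/4) / 50 ≤ (m:ℝ) - k := by linarith
    have h2 : (m:ℝ) ^ ((3:ℝ)/4) / 50 * OPT m p ≤ (B.card : ℝ) * OPT m p := by
      apply mul_le_mul_of_nonneg_right _ hOPT0
      linarith
    nlinarith [hup, hlow, hcon, hm0]
end

section
/- Let R be a uniformly random subset of size n/8 of an n-element set (n divisible by 8), and let A be a fixed subset with |A| = k, where m − 2^d ≤ k ≤ m for integers m ≥ 1 and d ≥ 0. Then P[ |A ∩ R| < (m−2^d)/8 − √m/2 ] ≤ 1/3. -/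
/-!
Counting the `r`-subsets that contain a fixed `j`-subset gives the factorial moments of the
hypergeometric variable `|A ∩ R|`; for `n = 8r` its mean is `k/8` and its variance at most
`7k/64`. The threshold is at most `k/8 - √m/2`, so Cantelli's one-sided inequality bounds the
probability by `(7k/64) / (7k/64 + m/4) ≤ 7/23 < 1/3`.
-/

open Finset

namespace Finset

variable {α : Type*} [DecidableEq α]

theorem card_filter_powersetCard_subset_mul_choose {s t : Finset α} (hst : s ⊆ t) (n : ℕ) :
    #{R ∈ t.powersetCard n | s ⊆ R} * (#t).choose #s = (#t).choose n * n.choose #s := by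
  rcases le_or_gt #s n with hsn | hns
  · rw [card_filter_powersetCard_subset s t n hst hsn, Nat.choose_mul hsn, mul_comm]
  · have hempty : {R ∈ t.powersetCard n | s ⊆ R} = ∅ :=
      filter_eq_empty_iff.mpr fun R hR hsR =>
        (card_le_card hsR).not_gt ((mem_powersetCard.mp hR).2 ▸ hns)
    rw [hempty, Nat.choose_eq_zero_of_lt hns]
    simp

theorem sum_choose_card_inter_powersetCard_mul {A t : Finset α} (hA : A ⊆ t) (n j : ℕ) :
    (∑ R ∈ t.powersetCard n, (#(A ∩ R)).choose j) * (#t).choose j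
      = (#A).choose j * n.choose j * (#t).choose n := by
  have hsubsets : ∀ R, (#(A ∩ R)).choose j = #{B ∈ A.powersetCard j | B ⊆ R} := fun R => by
    rw [← card_powersetCard]
    congr 1
    ext B
    simp [mem_powersetCard, subset_inter_iff, and_right_comm]
  have hcount : ∀ B ∈ A.powersetCard j,
      #{R ∈ t.powersetCard n | B ⊆ R} * (#t).choose j = (#t).choose n * n.choose j := by
    intro B hB
    obtain ⟨hBA, rfl⟩ := mem_powersetCard.mp hB
    exact card_filter_powersetCard_subset_mul_choose (hBA.trans hA) n
  have hdouble : ∑ R ∈ t.powersetCard n, #{B ∈ A.powersetCard j | B ⊆ R}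
      = ∑ B ∈ A.powersetCard j, #{R ∈ t.powersetCard n | B ⊆ R} := by
    simpa only [bipartiteAbove, bipartiteBelow] using
      sum_card_bipartiteAbove_eq_sum_card_bipartiteBelow (s := t.powersetCard n)
        (t := A.powersetCard j) (fun R B => B ⊆ R)
  rw [sum_congr rfl fun R _ => hsubsets R, hdouble, sum_mul, sum_congr rfl hcount, sum_const,
    card_powersetCard, smul_eq_mul]
  ring

theorem sum_card_inter_powersetCard {A t : Finset α} (hA : A ⊆ t) (r : ℕ) :
    ∑ R ∈ t.powersetCard r, (#(A ∩ R) : ℝ) = (#t).choose r * (#A * r / #t) := by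
  rcases eq_or_ne #t 0 with ht | ht
  · obtain rfl : A = ∅ := subset_empty.mp (card_eq_zero.mp ht ▸ hA)
    simp
  have h := sum_choose_card_inter_powersetCard_mul hA r 1
  simp only [Nat.choose_one_right] at h
  have ht' : (#t : ℝ) ≠ 0 := by exact_mod_cast ht
  rw [← Nat.cast_sum, mul_div_assoc', eq_div_iff ht']
  exact_mod_cast h.trans (by ring)

theorem sum_sq_card_inter_sub_powersetCard {A t : Finset α} (hA : A ⊆ t) (r : ℕ) (ht : 1 < #t) :
    ∑ R ∈ t.powersetCard r, ((#(A ∩ R) : ℝ) - #A * r / #t) ^ 2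
      = (#t).choose r * (#A * r * (#t - #A) * (#t - r) / (#t ^ 2 * (#t - 1))) := by
  have ht0 : (#t : ℝ) ≠ 0 := by positivity
  have ht1 : (#t : ℝ) - 1 ≠ 0 := sub_ne_zero.mpr (by exact_mod_cast ht.ne')
  have hpairs : ∑ R ∈ t.powersetCard r, (#(A ∩ R) : ℝ) * (#(A ∩ R) - 1)
      = (#t).choose r * (#A * (#A - 1) * r * (r - 1) / (#t * (#t - 1))) := by
    have h := sum_choose_card_inter_powersetCard_mul hA r 2
    rw [← Nat.cast_inj (R := ℝ)] at h
    push_cast [Nat.cast_choose_two, ← sum_div] at h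
    field_simp
    linear_combination 4 * h
  have hsplit : ∀ R, ((#(A ∩ R) : ℝ) - #A * r / #t) ^ 2
      = #(A ∩ R) * (#(A ∩ R) - 1) + (1 - 2 * (#A * r / #t)) * #(A ∩ R) + (#A * r / #t) ^ 2 :=
    fun R => by ring
  simp only [hsplit, sum_add_distrib, ← mul_sum, sum_const, card_powersetCard, nsmul_eq_mul,
    hpairs, sum_card_inter_powersetCard hA]
  field_simp
  ring

theorem sum_sq_card_inter_sub_powersetCard_le {A t : Finset α} (hA : A ⊆ t) {r : ℕ}
    (hrt : r ≤ #t) (ht : 1 < #t) :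
    ∑ R ∈ t.powersetCard r, ((#(A ∩ R) : ℝ) - #A * r / #t) ^ 2
      ≤ (#t).choose r * (#A * r * (#t - r) / #t ^ 2) := by
  rw [sum_sq_card_inter_sub_powersetCard hA r ht]
  have hrt' : (r : ℝ) ≤ #t := by exact_mod_cast hrt
  have ht1 : (0 : ℝ) < #t - 1 := sub_pos.mpr (by exact_mod_cast ht)
  have hA1 : (#A : ℝ) * (#t - #A) ≤ #A * (#t - 1) := by
    rcases (#A).eq_zero_or_pos with hA0 | hA0
    · simp [hA0]
    · have : (1 : ℝ) ≤ #A := by exact_mod_cast hA0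
      nlinarith
  refine mul_le_mul_of_nonneg_left ?_ (Nat.cast_nonneg _)
  rw [div_le_div_iff₀ (by positivity) (by positivity)]
  have := mul_le_mul_of_nonneg_right hA1 (by positivity : (0 : ℝ) ≤ r * (#t - r) * #t ^ 2)
  linear_combination this

/-- Cantelli's inequality for the uniform measure on `s`, proved via
`(X - μ - u)² ≥ (t + u)²` on the event with the optimal shift `u = V / t`. -/
theorem card_filter_le_sub_mul_le_of_sum_sq_sub_le {ι : Type*} (s : Finset ι) (X : ι → ℝ)
    {μ V t : ℝ} (ht : 0 < t) (hV : 0 ≤ V) (hmean : ∑ i ∈ s, X i = #s * μ)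
    (hvar : ∑ i ∈ s, (X i - μ) ^ 2 ≤ #s * V) :
    #{i ∈ s | X i ≤ μ - t} * (t ^ 2 + V) ≤ #s * V := by
  set u := V / t with hu
  have hu0 : 0 ≤ u := by positivity
  have hlow : ∀ i ∈ {i ∈ s | X i ≤ μ - t}, (t + u) ^ 2 ≤ (X i - μ - u) ^ 2 := by
    intro i hi
    have hXi := (mem_filter.mp hi).2
    rw [← neg_sq (X i - μ - u)]
    exact pow_le_pow_left₀ (by positivity) (by linarith) 2
  have hshift : ∑ i ∈ s, (X i - μ - u) ^ 2 ≤ #s * (V + u ^ 2) := by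
    have hexpand : ∀ i, (X i - μ - u) ^ 2 = (X i - μ) ^ 2 - 2 * u * X i + (2 * u * μ + u ^ 2) :=
      fun i => by ring
    simp only [hexpand, sum_add_distrib, sum_sub_distrib, ← mul_sum, sum_const, nsmul_eq_mul,
      hmean]
    linarith
  have hcount : #{i ∈ s | X i ≤ μ - t} * (t + u) ^ 2 ≤ #s * (V + u ^ 2) :=
    calc #{i ∈ s | X i ≤ μ - t} * (t + u) ^ 2
        ≤ ∑ i ∈ {i ∈ s | X i ≤ μ - t}, (X i - μ - u) ^ 2 := by
          simpa [nsmul_eq_mul] using card_nsmul_le_sum _ _ _ hlow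
      _ ≤ ∑ i ∈ s, (X i - μ - u) ^ 2 :=
          sum_le_sum_of_subset_of_nonneg (filter_subset _ _) fun i _ _ => sq_nonneg _
      _ ≤ #s * (V + u ^ 2) := hshift
  have hpos : 0 < (t ^ 2 + V) / t ^ 2 := by positivity
  have hsq : (t + u) ^ 2 = (t ^ 2 + V) / t ^ 2 * (t ^ 2 + V) := by rw [hu]; field_simp
  have hrhs : V + u ^ 2 = (t ^ 2 + V) / t ^ 2 * V := by rw [hu]; field_simp
  rw [hsq, hrhs] at hcount
  nlinarith

theorem card_filter_card_inter_le_sub_mul_le {A t : Finset α} (hA : A ⊆ t) {r : ℕ}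
    (ht : #t = 8 * r) (hr : 0 < r) {c : ℝ} (hc : 0 < c) :
    #{R ∈ t.powersetCard r | (#(A ∩ R) : ℝ) ≤ #A / 8 - c} * (c ^ 2 + 7 * #A / 64)
      ≤ (#(t.powersetCard r) : ℝ) * (7 * #A / 64) := by
  have hμ : (#A : ℝ) * r / #t = #A / 8 := by rw [ht]; push_cast; field_simp
  have hmean : ∑ R ∈ t.powersetCard r, (#(A ∩ R) : ℝ) = #(t.powersetCard r) * (#A / 8) := by
    rw [sum_card_inter_powersetCard hA, card_powersetCard, hμ]
  have hV : (#A : ℝ) * r * (#t - r) / #t ^ 2 = 7 * #A / 64 := by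
    rw [ht]
    push_cast
    field_simp
    ring
  have hvar := sum_sq_card_inter_sub_powersetCard_le hA (r := r) (by omega) (by omega)
  rw [hμ, hV, ← card_powersetCard] at hvar
  exact card_filter_le_sub_mul_le_of_sum_sq_sub_le _ _ hc (by positivity) hmean hvar

end Finset

/-- Let `R` be a uniformly random subset of size `n/8` of an `n`-element set
(`8 ∣ n`), and let `A` be a fixed subset with `|A| = k`, where `m − 2^d ≤ k ≤ m` for
integers `m ≥ 1` and `d ≥ 0`. Then `P[|A ∩ R| < (m−2^d)/8 − √m/2] ≤ 1/3`, stated by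
counting: the number of bad subsets is at most a third of all size-`n/8` subsets. -/
theorem stmt9 (n m d k : ℕ) (hn8 : 8 ∣ n) (hn : 0 < n) (hm : 1 ≤ m)
    (A : Finset (Fin n)) (hA : A.card = k)
    (hk1 : (m : ℝ) - 2 ^ d ≤ (k : ℝ)) (hk2 : k ≤ m) :
    3 * (((Finset.univ : Finset (Fin n)).powersetCard (n / 8)).filter
        (fun R => ((A ∩ R).card : ℝ) < ((m : ℝ) - 2 ^ d) / 8 - Real.sqrt m / 2)).card
      ≤ ((Finset.univ : Finset (Fin n)).powersetCard (n / 8)).card := by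
  obtain ⟨r, rfl⟩ := hn8
  subst hA
  rw [show 8 * r / 8 = r by omega]
  set P := (univ : Finset (Fin (8 * r))).powersetCard r
  have hm0 : (0 : ℝ) < m := by exact_mod_cast hm
  have hk : (#A : ℝ) ≤ m := by exact_mod_cast hk2
  have htail := card_filter_card_inter_le_sub_mul_le (subset_univ A) (r := r) (by simp) (by omega)
    (c := √m / 2) (by positivity)
  rw [div_pow, Real.sq_sqrt hm0.le] at htail
  have hsub : #{R ∈ P | (#(A ∩ R) : ℝ) < (m - 2 ^ d) / 8 - √m / 2}
      ≤ #{R ∈ P | (#(A ∩ R) : ℝ) ≤ #A / 8 - √m / 2} :=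
    card_le_card <| monotone_filter_right P fun R _ hR => by linarith
  have hthird : (3 : ℝ) * #{R ∈ P | (#(A ∩ R) : ℝ) ≤ #A / 8 - √m / 2} ≤ #P := by nlinarith
  exact_mod_cast (Nat.mul_le_mul_left 3 hsub).trans (by exact_mod_cast hthird)
end
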